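/- arXiv:2210.04748 — 7 statements merged into one kernel-verified Lean document; each statement's English description precedes it below -/
import Mathlib

section
/- Let n ≥ 1 and let M be an n×n complex matrix. The linear system X' = MX admits an exponential dichotomy on ℝ — that is, there exist an n×n complex matrix P with P·P = P and P·M = M·P, and constants K ≥ 1 and α > 0, such that ‖exp(t•M)·P‖ ≤ K·exp(−α·t) for all t ≥ 0 and ‖exp(t•M)·(1 − P)‖ ≤ K·exp(α·t) for all t ≤ 0 — if and only if every z in the spectrum of M over ℂ satisfies Re z ≠ 0. -/
/-! If `M v = z v` with `Re z = 0`, then `‖exp (t M) v‖ = ‖v‖` for every `t`, which is incompatible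
with `P v` decaying as `t → ∞` and `(1 - P) v` decaying as `t → -∞`.

Conversely, split the characteristic polynomial as `χ = p₋ p₊` according to the sign of the real
parts of its roots. A Bézout identity for the coprime factors gives an idempotent `P`, a polynomial
in `M`, with `p₋(M) P = 0` and `p₊(M) (1 - P) = 0`. If `p(M) b = 0` and every root of `p` has real
part `< -β`, then `‖exp (t M) b‖ ≤ K e^{-βt}` for `t ≥ 0`: peel off one factor `M - z` at a time
and integrate `d/dt (e^{-tz} exp (t M) b) = e^{-tz} exp (t M) (M - z) b`. Applied to `-M`, the same
bound controls `exp (t M) (1 - P)` for `t ≤ 0`. -/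

open NormedSpace Polynomial Filter Topology

theorem exists_pos_lt_abs_re (s : Multiset ℂ) (hs : ∀ z ∈ s, z.re ≠ 0) :
    ∃ β : ℝ, 0 < β ∧ ∀ z ∈ s, β < |z.re| := by
  have : ∀ᶠ β in 𝓝[>] (0 : ℝ), ∀ z ∈ s.toFinset, β < |z.re| :=
    (eventually_all_finset _).2 fun z hz => eventually_nhdsWithin_of_eventually_nhds
      (eventually_lt_nhds (abs_pos.2 (hs z (Multiset.mem_toFinset.1 hz))))
  obtain ⟨β, hβ, hβ0⟩ := (this.and self_mem_nhdsWithin).exists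
  exact ⟨β, hβ0, fun z hz => hβ z (Multiset.mem_toFinset.2 hz)⟩

theorem nonpos_of_forall_le_mul_exp_neg {c L α : ℝ} (hα : 0 < α)
    (h : ∀ t : ℝ, 0 ≤ t → c ≤ L * Real.exp (-α * t)) : c ≤ 0 := by
  have hlim : Tendsto (fun t => L * Real.exp (-α * t)) atTop (𝓝 0) := by
    simpa using (Real.tendsto_exp_atBot.comp
      (tendsto_id.const_mul_atTop_of_neg (neg_lt_zero.2 hα))).const_mul L
  exact ge_of_tendsto hlim (eventually_atTop.2 ⟨0, h⟩)

theorem exists_isIdempotentElem_of_isCoprime {R A : Type*} [CommRing R] [Ring A] [Algebra R A]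
    {p q : R[X]} (hpq : IsCoprime p q) {a : A} (h : aeval a (p * q) = 0) :
    ∃ e : A, IsIdempotentElem e ∧ Commute e a ∧ aeval a p * e = 0 ∧ aeval a q * (1 - e) = 0 := by
  obtain ⟨u, v, huv⟩ := hpq
  have hsub : 1 - aeval a (v * q) = aeval a (u * p) := by
    rw [sub_eq_iff_eq_add, ← map_add, huv, map_one]
  refine ⟨aeval a (v * q), ?_, ?_, ?_, ?_⟩
  · have h0 : aeval a (v * q) * (1 - aeval a (v * q)) = 0 := by
      rw [hsub, ← map_mul, show v * q * (u * p) = u * v * (p * q) by ring, map_mul, h, mul_zero]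
    rwa [mul_sub, mul_one, sub_eq_zero, eq_comm] at h0
  · simpa using ((commute_X (v * q)).map (aeval a)).symm
  · rw [← map_mul, show p * (v * q) = v * (p * q) by ring, map_mul, h, mul_zero]
  · rw [hsub, ← map_mul, show q * (u * p) = u * (p * q) by ring, map_mul, h, mul_zero]

theorem isCoprime_prod_X_sub_C_of_disjoint {K : Type*} [Field K] [IsAlgClosed K]
    {s t : Multiset K} (h : ∀ z ∈ s, z ∉ t) :
    IsCoprime (s.map fun z => X - C z).prod (t.map fun z => X - C z).prod := by
  refine (isCoprime_iff_aeval_ne_zero_of_isAlgClosed K K _ _).2 fun w => ?_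
  simp only [coe_aeval_eq_eval, eval_multiset_prod, Multiset.map_map, Function.comp_def, eval_sub,
    eval_X, eval_C, ne_eq, Multiset.prod_eq_zero_iff, Multiset.mem_map, sub_eq_zero]
  by_contra! hw
  obtain ⟨⟨z, hz, hwz⟩, ⟨z', hz', hwz'⟩⟩ := hw
  exact h z hz (hwz ▸ hwz' ▸ hz')

theorem aeval_neg_prod_X_sub_C_neg {R A : Type*} [CommRing R] [Ring A] [Algebra R A]
    (s : Multiset R) (a : A) :
    aeval (-a) ((s.map Neg.neg).map fun z => X - C z).prod =
      (-1) ^ Multiset.card s * aeval a (s.map fun z => X - C z).prod := by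
  have hcomp : ∀ z : R, (X - C (-z)).comp (-X) = -(X - C z) := fun z => by
    simp only [map_neg, sub_neg_eq_add, add_comp, X_comp, C_comp, neg_sub]; ring
  have hpoly : ((s.map Neg.neg).map fun z => X - C z).prod.comp (-X) =
      (-1) ^ Multiset.card s * (s.map fun z => X - C z).prod := by
    rw [multiset_prod_comp, Multiset.map_map, Multiset.map_map]
    simp only [Function.comp_def]
    rw [Multiset.map_congr rfl fun z _ => hcomp z,
      show (fun z => -(X - C z)) = Neg.neg ∘ fun z : R => X - C z from rfl, ← Multiset.map_map,
      Multiset.prod_map_neg, Multiset.card_map]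
  calc aeval (-a) ((s.map Neg.neg).map fun z => X - C z).prod
      = aeval a (((s.map Neg.neg).map fun z => X - C z).prod.comp (-X)) := by
        rw [aeval_comp, map_neg, aeval_X]
    _ = _ := by rw [hpoly, map_mul, map_pow, map_neg, map_one]

section BanachAlgebra

variable {𝔸 : Type*} [NormedRing 𝔸] [NormedAlgebra ℂ 𝔸]

def HasExponentialDichotomy (a : 𝔸) : Prop :=
  ∃ (p : 𝔸) (K α : ℝ), IsIdempotentElem p ∧ Commute p a ∧ 1 ≤ K ∧ 0 < α ∧
    (∀ t : ℝ, 0 ≤ t → ‖exp (t • a) * p‖ ≤ K * Real.exp (-α * t)) ∧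
    (∀ t : ℝ, t ≤ 0 → ‖exp (t • a) * (1 - p)‖ ≤ K * Real.exp (α * t))

variable [CompleteSpace 𝔸]

theorem exp_mul_eq_smul_of_mul_eq_smul {a e : 𝔸} {c : ℂ} (h : a * e = c • e) :
    exp a * e = Complex.exp c • e := by
  have hpow : ∀ k : ℕ, a ^ k * e = c ^ k • e := by
    intro k
    induction k with
    | zero => simp
    | succ k ih => rw [pow_succ', mul_assoc, ih, mul_smul_comm, h, smul_smul, ← pow_succ]
  have hsum := (exp_series_hasSum_exp' (𝕂 := ℂ) c).smul_const e
  rw [Complex.exp_eq_exp_ℂ]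
  refine ((exp_series_hasSum_exp' (𝕂 := ℂ) a).mul_right e).unique ?_
  simpa only [smul_mul_assoc, hpow, smul_smul, smul_eq_mul] using hsum

theorem hasDerivAt_cexp_smul_exp_smul_mul (a b : 𝔸) (z : ℂ) (u : ℝ) :
    HasDerivAt (fun u : ℝ => Complex.exp (-(u * z)) • (exp (u • a) * b))
      (Complex.exp (-(u * z)) • (exp (u • a) * ((a - algebraMap ℂ 𝔸 z) * b))) u := by
  have hc : HasDerivAt (fun u : ℝ => Complex.exp (-(u * z))) (Complex.exp (-(u * z)) * -z) u := by
    simpa using ((Complex.ofRealCLM.hasDerivAt (x := u)).mul_const z).neg.cexp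
  have he : HasDerivAt (fun u : ℝ => exp (u • a) * b) (exp (u • a) * a * b) u :=
    (hasDerivAt_exp_smul_const a u).mul_const b
  refine (hc.smul he).congr_deriv ?_
  simp only [sub_mul, mul_sub, ← mul_assoc, Algebra.algebraMap_eq_smul_one, smul_mul_assoc, one_mul,
    mul_smul_comm]
  module

theorem exists_norm_exp_smul_mul_le_of_sub_mul {a b : 𝔸} {z : ℂ} {β K : ℝ} (hz : z.re < -β)
    (hK : ∀ t : ℝ, 0 ≤ t → ‖exp (t • a) * ((a - algebraMap ℂ 𝔸 z) * b)‖ ≤ K * Real.exp (-β * t)) :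
    ∃ K', ∀ t : ℝ, 0 ≤ t → ‖exp (t • a) * b‖ ≤ K' * Real.exp (-β * t) := by
  set δ := -β - z.re with hδdef
  have hδ : 0 < δ := by linarith
  have hK0 : 0 ≤ K := by simpa using (norm_nonneg _).trans (hK 0 le_rfl)
  set F := fun u : ℝ => Complex.exp (-(u * z)) • (exp (u • a) * b)
  have hF := hasDerivAt_cexp_smul_exp_smul_mul a b z
  -- `‖F'‖ ≤ K e^{δu}`, so `‖F‖` stays below the primitive of `K e^{δu}` starting at `‖F 0‖ = ‖b‖`.
  have hB : ∀ u, HasDerivAt (fun u => ‖b‖ + K / δ * (Real.exp (δ * u) - 1))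
      (K * Real.exp (δ * u)) u := by
    intro u
    refine ((((hasDerivAt_id' u).const_mul δ).exp.sub_const 1).const_mul (K / δ)).const_add ‖b‖
      |>.congr_deriv ?_
    field_simp
  have hFt : ∀ t, 0 ≤ t → ‖F t‖ ≤ ‖b‖ + K / δ * (Real.exp (δ * t) - 1) := by
    intro t ht
    refine image_norm_le_of_norm_deriv_right_le_deriv_boundary
      (continuous_iff_continuousAt.2 fun u => (hF u).continuousAt).continuousOn
      (fun u _ => (hF u).hasDerivWithinAt) (by simp) hB (fun u hu => ?_) ⟨ht, le_rfl⟩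
    rw [norm_smul, Complex.norm_exp, Complex.neg_re, Complex.re_ofReal_mul]
    calc Real.exp (-(u * z.re)) * ‖exp (u • a) * ((a - algebraMap ℂ 𝔸 z) * b)‖
        ≤ Real.exp (-(u * z.re)) * (K * Real.exp (-β * u)) := by gcongr; exact hK u hu.1
      _ = K * Real.exp (δ * u) := by rw [mul_left_comm, ← Real.exp_add, hδdef]; ring_nf
  refine ⟨‖b‖ + K / δ, fun t ht => ?_⟩
  have hexp : exp (t • a) * b = Complex.exp (t * z) • F t := by
    simp only [F, smul_smul, ← Complex.exp_add, add_neg_cancel, Complex.exp_zero, one_smul]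
  have hre : Real.exp (t * z.re) ≤ Real.exp (-β * t) := Real.exp_le_exp.2 (by nlinarith)
  calc ‖exp (t • a) * b‖ = Real.exp (t * z.re) * ‖F t‖ := by
        rw [hexp, norm_smul, Complex.norm_exp, Complex.re_ofReal_mul]
    _ ≤ Real.exp (t * z.re) * (‖b‖ + K / δ * Real.exp (δ * t)) := by
        gcongr
        linarith [hFt t ht, div_nonneg hK0 hδ.le]
    _ = Real.exp (t * z.re) * ‖b‖ + K / δ * Real.exp (-β * t) := by
        rw [mul_add, mul_left_comm, ← Real.exp_add, hδdef]; ring_nf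
    _ ≤ (‖b‖ + K / δ) * Real.exp (-β * t) := by
        nlinarith [norm_nonneg b]

theorem exists_norm_exp_smul_mul_le_of_re_lt (s : Multiset ℂ) {β : ℝ} (hs : ∀ z ∈ s, z.re < -β)
    {a b : 𝔸} (hb : aeval a (s.map fun z => X - C z).prod * b = 0) :
    ∃ K, ∀ t : ℝ, 0 ≤ t → ‖exp (t • a) * b‖ ≤ K * Real.exp (-β * t) := by
  induction s using Multiset.induction generalizing b with
  | empty => exact ⟨0, fun t _ => by simp_all⟩
  | cons z s ih =>
    have hw : aeval a (s.map fun z => X - C z).prod * ((a - algebraMap ℂ 𝔸 z) * b) = 0 := by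
      rw [← mul_assoc, ← hb, Multiset.map_cons, Multiset.prod_cons, mul_comm (X - C z), map_mul]
      simp
    obtain ⟨K, hK⟩ := ih (fun w hw => hs w (Multiset.mem_cons_of_mem hw)) hw
    exact exists_norm_exp_smul_mul_le_of_sub_mul (hs z (Multiset.mem_cons_self z s)) hK

theorem exists_norm_exp_smul_mul_le_of_lt_re (s : Multiset ℂ) {β : ℝ} (hs : ∀ z ∈ s, β < z.re)
    {a b : 𝔸} (hb : aeval a (s.map fun z => X - C z).prod * b = 0) :
    ∃ K, ∀ t : ℝ, t ≤ 0 → ‖exp (t • a) * b‖ ≤ K * Real.exp (β * t) := by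
  have hb' : aeval (-a) ((s.map Neg.neg).map fun z => X - C z).prod * b = 0 := by
    rw [aeval_neg_prod_X_sub_C_neg, mul_assoc, hb, mul_zero]
  obtain ⟨K, hK⟩ := exists_norm_exp_smul_mul_le_of_re_lt (s.map Neg.neg) (by simpa using hs) hb'
  refine ⟨K, fun t ht => ?_⟩
  simpa [neg_smul, smul_neg] using hK (-t) (by linarith)

theorem hasExponentialDichotomy_of_aeval_prod_eq_zero (s : Multiset ℂ) (hs : ∀ z ∈ s, z.re ≠ 0)
    {a : 𝔸} (ha : aeval a (s.map fun z => X - C z).prod = 0) : HasExponentialDichotomy a := by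
  obtain ⟨β, hβ, hβs⟩ := exists_pos_lt_abs_re s hs
  set sₛ := s.filter fun z => z.re < 0
  set sᵤ := s.filter fun z => ¬z.re < 0
  have hcop : IsCoprime (sₛ.map fun z => X - C z).prod (sᵤ.map fun z => X - C z).prod :=
    isCoprime_prod_X_sub_C_of_disjoint fun z hz hz' =>
      (Multiset.mem_filter.1 hz').2 (Multiset.mem_filter.1 hz).2
  have hprod : aeval a ((sₛ.map fun z => X - C z).prod * (sᵤ.map fun z => X - C z).prod) = 0 := by
    rwa [← Multiset.prod_add, ← Multiset.map_add, Multiset.filter_add_not]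
  obtain ⟨p, hp, hpa, hₛ, hᵤ⟩ := exists_isIdempotentElem_of_isCoprime hcop hprod
  obtain ⟨Kₛ, hKₛ⟩ := exists_norm_exp_smul_mul_le_of_re_lt sₛ (β := β) (fun z hz => by
    obtain ⟨hzs, hz⟩ := Multiset.mem_filter.1 hz
    linarith [abs_of_neg hz ▸ hβs z hzs]) hₛ
  obtain ⟨Kᵤ, hKᵤ⟩ := exists_norm_exp_smul_mul_le_of_lt_re sᵤ (β := β) (fun z hz => by
    obtain ⟨hzs, hz⟩ := Multiset.mem_filter.1 hz
    linarith [abs_of_nonneg (not_lt.1 hz) ▸ hβs z hzs]) hᵤ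
  refine ⟨p, max 1 (max Kₛ Kᵤ), β, hp, hpa, le_max_left _ _, hβ, fun t ht => ?_, fun t ht => ?_⟩
  · exact (hKₛ t ht).trans (by gcongr; exact (le_max_left _ _).trans (le_max_right _ _))
  · exact (hKᵤ t ht).trans (by gcongr; exact (le_max_right _ _).trans (le_max_right _ _))

theorem mul_eq_zero_of_norm_exp_smul_mul_le {a q e : 𝔸} {z : ℂ} {K α : ℝ} (hα : 0 < α)
    (hq : Commute q a) (h : ∀ t : ℝ, 0 ≤ t → ‖exp (t • a) * q‖ ≤ K * Real.exp (-α * t))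
    (he : a * e = z • e) (hz : z.re = 0) : q * e = 0 := by
  refine norm_le_zero_iff.1 (nonpos_of_forall_le_mul_exp_neg (L := K * ‖e‖) hα fun t ht => ?_)
  have het : (t • a) * e = (t * z) • e := by
    rw [← Complex.coe_smul, smul_mul_assoc, he, smul_smul]
  calc ‖q * e‖ = ‖exp (t • a) * q * e‖ := by
        rw [← ((hq.smul_right t).exp_right).eq, mul_assoc, exp_mul_eq_smul_of_mul_eq_smul het,
          mul_smul_comm, norm_smul, Complex.norm_exp, Complex.re_ofReal_mul, hz, mul_zero,
          Real.exp_zero, one_mul]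
    _ ≤ K * Real.exp (-α * t) * ‖e‖ := norm_mul_le_of_le (h t ht) le_rfl
    _ = K * ‖e‖ * Real.exp (-α * t) := by ring

theorem HasExponentialDichotomy.re_ne_zero {a e : 𝔸} {z : ℂ} (ha : HasExponentialDichotomy a)
    (he : a * e = z • e) (he0 : e ≠ 0) : z.re ≠ 0 := by
  obtain ⟨p, K, α, -, hpa, -, hα, hₛ, hᵤ⟩ := ha
  intro hz
  have hpe : p * e = 0 := mul_eq_zero_of_norm_exp_smul_mul_le hα hpa hₛ he hz
  have hpe' : (1 - p) * e = 0 :=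
    mul_eq_zero_of_norm_exp_smul_mul_le (a := -a) (z := -z) hα
      ((Commute.one_left a).sub_left hpa).neg_right
      (fun t ht => by simpa [neg_smul, smul_neg] using hᵤ (-t) (by linarith))
      (by rw [neg_mul, he, neg_smul]) (by simp [hz])
  exact he0 (by simpa [sub_mul, hpe] using hpe')

end BanachAlgebra

namespace Matrix

theorem exists_ne_zero_mul_eq_smul_of_det_eq_zero {ι R : Type*} [Fintype ι] [DecidableEq ι]
    [CommRing R] [IsDomain R] {M : Matrix ι ι R} {z : R} (h : (z • 1 - M).det = 0) :
    ∃ E : Matrix ι ι R, E ≠ 0 ∧ M * E = z • E := by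
  obtain ⟨v, hv, hzv⟩ := exists_mulVec_eq_zero_iff.2 h
  refine ⟨vecMulVec v v, vecMulVec_ne_zero hv hv, ?_⟩
  rw [sub_mulVec, smul_mulVec, one_mulVec, sub_eq_zero] at hzv
  ext i j
  have hi := congrFun hzv i
  simp only [Pi.smul_apply, smul_eq_mul, mulVec, dotProduct] at hi
  simp only [mul_apply, vecMulVec_apply, smul_apply, smul_eq_mul, ← mul_assoc, ← Finset.sum_mul, hi]

theorem det_smul_one_sub_eq_zero_of_mem_roots_charpoly {ι R : Type*} [Fintype ι] [DecidableEq ι]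
    [CommRing R] [IsDomain R] {M : Matrix ι ι R} {z : R} (hz : z ∈ M.charpoly.roots) :
    (z • 1 - M).det = 0 := by
  simpa [eval_charpoly, scalar_apply, smul_one_eq_diagonal] using
    (mem_roots M.charpoly_monic.ne_zero).1 hz

section LinftyOpNorm

attribute [local instance] Matrix.linftyOpNormedRing Matrix.linftyOpNormedAlgebra

theorem hasExponentialDichotomy_iff {ι : Type*} [Fintype ι] [DecidableEq ι] (M : Matrix ι ι ℂ) :
    HasExponentialDichotomy M ↔ ∀ z : ℂ, (z • (1 : Matrix ι ι ℂ) - M).det = 0 → z.re ≠ 0 := by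
  refine ⟨fun hM z hz => ?_, fun h => ?_⟩
  · obtain ⟨E, hE, hME⟩ := exists_ne_zero_mul_eq_smul_of_det_eq_zero hz
    exact hM.re_ne_zero hME hE
  · have hχ := (IsAlgClosed.splits M.charpoly).eq_prod_roots_of_monic M.charpoly_monic
    exact hasExponentialDichotomy_of_aeval_prod_eq_zero M.charpoly.roots
      (fun z hz => h z (det_smul_one_sub_eq_zero_of_mem_roots_charpoly hz))
      (hχ ▸ aeval_self_charpoly M)

end LinftyOpNorm

end Matrix

open scoped Matrix

attribute [local instance] Matrix.linftyOpNormedAddCommGroup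

theorem stmt_0_general (n : ℕ) (M : Matrix (Fin n) (Fin n) ℂ) :
    (∃ (P : Matrix (Fin n) (Fin n) ℂ) (K α : ℝ),
      P * P = P ∧ P * M = M * P ∧ 1 ≤ K ∧ 0 < α ∧
      (∀ t : ℝ, 0 ≤ t → ‖NormedSpace.exp (t • M) * P‖ ≤ K * Real.exp (-α * t)) ∧
      (∀ t : ℝ, t ≤ 0 → ‖NormedSpace.exp (t • M) * (1 - P)‖ ≤ K * Real.exp (α * t))) ↔
    (∀ z : ℂ, (z • (1 : Matrix (Fin n) (Fin n) ℂ) - M).det = 0 → z.re ≠ 0) :=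
  -- definitionally, `IsIdempotentElem P` is `P * P = P`, `Commute P M` is `P * M = M * P`, and the
  -- norm of `linftyOpNormedRing` is that of `linftyOpNormedAddCommGroup`
  Matrix.hasExponentialDichotomy_iff M

/-- The constant-coefficient linear system `X' = MX` admits an exponential dichotomy on ℝ
iff every spectral point of `M` (i.e. every `z` with `det (z • 1 - M) = 0`) has nonzero
real part. -/
theorem stmt_0 (n : ℕ) (hn : 1 ≤ n) (M : Matrix (Fin n) (Fin n) ℂ) :
    (∃ (P : Matrix (Fin n) (Fin n) ℂ) (K α : ℝ),
      P * P = P ∧ P * M = M * P ∧ 1 ≤ K ∧ 0 < α ∧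
      (∀ t : ℝ, 0 ≤ t → ‖NormedSpace.exp (t • M) * P‖ ≤ K * Real.exp (-α * t)) ∧
      (∀ t : ℝ, t ≤ 0 → ‖NormedSpace.exp (t • M) * (1 - P)‖ ≤ K * Real.exp (α * t))) ↔
    (∀ z : ℂ, (z • (1 : Matrix (Fin n) (Fin n) ℂ) - M).det = 0 → z.re ≠ 0) :=
  stmt_0_general n M
end

section
/- Let V ⊆ ℂ be open, let U ⊆ ℂ be a nonempty bounded open set whose closure is contained in V, and let f : ℂ × ℝ → ℂ be continuous on V × [0,1] such that for each t ∈ [0,1] the map z ↦ f(z,t) is analytic on V. Assume f(z,t) ≠ 0 for every z in the frontier of U and every t ∈ [0,1]. Then for each t ∈ [0,1] the zero set Z(t) = {z ∈ U : f(z,t) = 0} is finite, and the total number of zeros counted with multiplicity, N(t) = Σ_{z ∈ Z(t)} ord_z(f(·,t)), is the same for all t ∈ [0,1], where ord_z(f(·,t)) denotes the order of vanishing of the analytic function z ↦ f(z,t) at z. -/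
/-! Zeros of an analytic function in `closure U` are isolated: near a point of `U` where it
vanishes identically it vanishes on the whole connected component, whose frontier lies in
`frontier U`, where it does not vanish. Being isolated in a compact set, they are finitely many.

Fix `t₀` and surround the zeros of `f(·, t₀)` in `U` by small disjoint disks. Outside these
disks `‖f(·, t₀)‖ ≥ ε > 0` on `closure U`, and by uniform continuity
`‖f(·, t) - f(·, t₀)‖ < ε` on `closure U` for `t` near `t₀`. Then `f(·, t)` has no zeros in `U`
outside the disks, and Rouché's theorem (the argument principle along the linear homotopy from
`f(·, t₀)` to `f(·, t)`) gives the same number of zeros as `f(·, t₀)` inside each disk. The zero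
count is therefore locally constant on the connected set `[0, 1]`. -/

open Set Metric Filter Topology

theorem frontier_connectedComponentIn_subset {X : Type*} [TopologicalSpace X]
    [LocallyConnectedSpace X] {U : Set X} (hU : IsOpen U) (x : X) :
    frontier (connectedComponentIn U x) ⊆ frontier U := by
  intro y hy
  rw [hU.connectedComponentIn.frontier_eq] at hy
  rw [hU.frontier_eq]
  refine ⟨closure_mono (connectedComponentIn_subset U x) hy.1, fun hyU => hy.2 ?_⟩
  have hsub : insert y (connectedComponentIn U x) ⊆ connectedComponentIn U x :=
    (isPreconnected_connectedComponentIn.subset_closure (subset_insert _ _)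
      (insert_subset hy.1 subset_closure)).subset_connectedComponentIn
      (mem_insert_of_mem _ (mem_connectedComponentIn ?_))
      (insert_subset hyU (connectedComponentIn_subset U x))
  · exact hsub (mem_insert y _)
  · by_contra hx
    simp [connectedComponentIn_eq_empty hx] at hy

theorem exists_pos_pairwiseDisjoint_closedBall_subset {α : Type*} [MetricSpace α]
    {Z : Finset α} {U : Set α} (hU : IsOpen U) (hZU : ∀ z ∈ Z, z ∈ U) :
    ∃ r > 0, (∀ z ∈ Z, closedBall z r ⊆ U) ∧ (Z : Set α).PairwiseDisjoint (closedBall · r) := by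
  have hsmall : ∀ᶠ r in 𝓝 (0 : ℝ), ∀ z ∈ Z,
      closedBall z r ⊆ U ∧ ∀ z' ∈ Z, z ≠ z' → r + r < dist z z' := by
    refine (eventually_all_finset Z).2 fun z hz =>
      (eventually_closedBall_subset (hU.mem_nhds (hZU z hz))).and
        ((eventually_all_finset Z).2 fun z' _ => ?_)
    by_cases hzz : z = z'
    · exact .of_forall fun _ h => absurd hzz h
    · filter_upwards [eventually_lt_nhds (half_pos (dist_pos.2 hzz))] with r hr _
      linarith
  obtain ⟨r, hrZ, hr⟩ := ((hsmall.filter_mono nhdsWithin_le_nhds).and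
    (self_mem_nhdsWithin (s := Ioi 0))).exists
  exact ⟨r, hr, fun z hz => (hrZ z hz).1,
    fun z hz z' hz' hne => closedBall_disjoint_closedBall ((hrZ z hz).2 z' hz' hne)⟩

theorem disjoint_sphere_biUnion_ball {α : Type*} [PseudoMetricSpace α] {Z : Set α} {r : ℝ}
    (hdisj : Z.PairwiseDisjoint (closedBall · r)) {z : α} (hz : z ∈ Z) :
    Disjoint (sphere z r) (⋃ z' ∈ Z, ball z' r) := by
  refine disjoint_left.2 fun w hw hmem => ?_
  obtain ⟨z', hz', hwz'⟩ := mem_iUnion₂.1 hmem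
  by_cases hzz : z = z'
  · subst hzz
    exact (mem_sphere.1 hw).not_lt (mem_ball.1 hwz')
  · exact (hdisj hz hz' hzz).ne_of_mem (sphere_subset_closedBall hw)
      (ball_subset_closedBall hwz') rfl

namespace AnalyticOnNhd

variable {U : Set ℂ} {g : ℂ → ℂ}

theorem analyticOrderAt_ne_top_of_frontier (hUo : IsOpen U) (hUb : Bornology.IsBounded U)
    (hg : AnalyticOnNhd ℂ g (closure U)) (hfr : ∀ z ∈ frontier U, g z ≠ 0) :
    ∀ z ∈ closure U, analyticOrderAt g z ≠ ⊤ := by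
  have hfr' : ∀ z ∈ frontier U, analyticOrderAt g z ≠ ⊤ := fun z hz => by
    simp [(hg z (frontier_subset_closure hz)).analyticOrderAt_eq_zero.2 (hfr z hz)]
  intro z hz
  by_cases hzU : z ∈ U
  · set C := connectedComponentIn U z
    have hCU : C ⊆ U := connectedComponentIn_subset U z
    obtain ⟨x, hx⟩ : (frontier C).Nonempty := nonempty_frontier_iff.2
      ⟨⟨z, mem_connectedComponentIn hzU⟩,
        fun h => NormedSpace.unbounded_univ ℝ ℂ (h ▸ hUb.subset hCU)⟩
    exact (hg.mono (closure_mono hCU)).analyticOrderAt_ne_top_of_isPreconnected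
      isPreconnected_connectedComponentIn.closure (frontier_subset_closure hx)
      (subset_closure (mem_connectedComponentIn hzU))
      (hfr' x (frontier_connectedComponentIn_subset hUo z hx))
  · exact hfr' z ⟨hz, by rwa [hUo.interior_eq]⟩

theorem finite_setOf_eq_zero_of_frontier (hUo : IsOpen U) (hUb : Bornology.IsBounded U)
    (hg : AnalyticOnNhd ℂ g (closure U)) (hfr : ∀ z ∈ frontier U, g z ≠ 0) :
    {z ∈ closure U | g z = 0}.Finite := by
  refine IsCompact.finite ?_ (isDiscrete_iff_nhdsNE.2 fun z hz => ?_)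
  · exact hUb.isCompact_closure.of_isClosed_subset
      (hg.continuousOn.preimage_isClosed_of_isClosed isClosed_closure isClosed_singleton)
      (sep_subset _ _)
  · have hne := ((hg z hz.1).eventually_eq_zero_or_eventually_ne_zero).resolve_left
      (by rw [← analyticOrderAt_eq_top]
          exact hg.analyticOrderAt_ne_top_of_frontier hUo hUb hfr z hz.1)
    rw [inf_principal_eq_bot]
    filter_upwards [hne] with w hw using fun h => hw h.2

theorem finite_inter_support_analyticOrderNatAt (hUo : IsOpen U) (hUb : Bornology.IsBounded U)
    (hg : AnalyticOnNhd ℂ g (closure U)) (hfr : ∀ z ∈ frontier U, g z ≠ 0) :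
    (U ∩ Function.support (analyticOrderNatAt g)).Finite :=
  (hg.finite_setOf_eq_zero_of_frontier hUo hUb hfr).subset
    fun _ hz => ⟨subset_closure hz.1, apply_eq_zero_of_analyticOrderNatAt_ne_zero hz.2⟩

theorem dslope {c : ℂ} (hg : AnalyticOnNhd ℂ g U) (hc : c ∈ U) :
    AnalyticOnNhd ℂ (_root_.dslope g c) U := by
  have hO : IsOpen {w | AnalyticAt ℂ g w} := isOpen_analyticAt ℂ g
  refine ((Complex.analyticOnNhd_iff_differentiableOn hO).2 ?_).mono fun w hw => hg w hw
  exact (Complex.differentiableOn_dslope (hO.mem_nhds (hg c hc))).2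
    fun w hw => hw.differentiableAt.differentiableWithinAt

theorem continuousOn_logDeriv (hg : AnalyticOnNhd ℂ g U) (h0 : ∀ z ∈ U, g z ≠ 0) :
    ContinuousOn (logDeriv g) U :=
  hg.deriv.continuousOn.div hg.continuousOn h0

end AnalyticOnNhd

/-- Meaningful only when `g` has finitely many zeros in `s` (otherwise the `finsum` is `0`) and
vanishes identically near none of them (there `analyticOrderNatAt` is `0`). -/
noncomputable def zeroCount (g : ℂ → ℂ) (s : Set ℂ) : ℕ := ∑ᶠ z ∈ s, analyticOrderNatAt g z

section ZeroCount

variable {f g : ℂ → ℂ} {s : Set ℂ}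

theorem zeroCount_eq_zero (h0 : ∀ z ∈ s, g z ≠ 0) : zeroCount g s = 0 :=
  finsum_mem_of_eqOn_zero fun z hz => by_contra fun h =>
    h0 z hz (apply_eq_zero_of_analyticOrderNatAt_ne_zero h)

theorem zeroCount_eq_sum_analyticOrderNatAt {Z : Finset ℂ} (hZ : ↑Z = {z ∈ s | g z = 0}) :
    zeroCount g s = ∑ z ∈ Z, analyticOrderNatAt g z :=
  finsum_mem_eq_sum_of_subset _
    (fun _ hz => hZ ▸ ⟨hz.1, apply_eq_zero_of_analyticOrderNatAt_ne_zero hz.2⟩)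
    (hZ ▸ sep_subset _ _)

theorem zeroCount_mul (hf : AnalyticOnNhd ℂ f s) (hg : AnalyticOnNhd ℂ g s)
    (hf' : ∀ z ∈ s, analyticOrderAt f z ≠ ⊤) (hg' : ∀ z ∈ s, analyticOrderAt g z ≠ ⊤)
    (hfs : (s ∩ Function.support (analyticOrderNatAt f)).Finite)
    (hgs : (s ∩ Function.support (analyticOrderNatAt g)).Finite) :
    zeroCount (f * g) s = zeroCount f s + zeroCount g s := by
  rw [zeroCount, finsum_mem_congr rfl fun z hz =>
    analyticOrderNatAt_mul (hf z hz) (hg z hz) (hf' z hz) (hg' z hz)]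
  exact finsum_mem_add_distrib' hfs hgs

theorem zeroCount_id_sub_const {c : ℂ} (hc : c ∈ s) : zeroCount (· - c) s = 1 := by
  rw [zeroCount, finsum_mem_eq_sum_of_subset (t := {c}) _ ?_ (by simpa using hc)]
  · simp [analyticOrderNatAt]
  · rintro z ⟨-, hz⟩
    by_contra hzc
    simp [analyticOrderNatAt, analyticOrderAt_id_sub_const_of_ne (by simpa using hzc)] at hz

theorem zeroCount_eq_sum_of_pairwiseDisjoint {Z : Finset ℂ} {B : ℂ → Set ℂ}
    (hdisj : (Z : Set ℂ).PairwiseDisjoint B) (hB : ∀ z ∈ Z, B z ⊆ s)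
    (hzeros : ∀ w ∈ s, g w = 0 → ∃ z ∈ Z, w ∈ B z)
    (hfin : (s ∩ Function.support (analyticOrderNatAt g)).Finite) :
    zeroCount g s = ∑ z ∈ Z, zeroCount g (B z) := by
  set S := Function.support (analyticOrderNatAt g)
  have hmem : ∀ w ∈ S, w ∈ s ↔ w ∈ ⋃ z ∈ (Z : Set ℂ), B z ∩ S := fun w hw => by
    simp only [mem_iUnion, mem_inter_iff, Finset.mem_coe, exists_prop]
    refine ⟨fun hws => ?_, fun ⟨z, hz, hwz, _⟩ => hB z hz hwz⟩
    obtain ⟨z, hz, hwz⟩ := hzeros w hws (apply_eq_zero_of_analyticOrderNatAt_ne_zero hw)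
    exact ⟨z, hz, hwz, hw⟩
  rw [zeroCount, finsum_mem_inter_support_eq' _ _ _ hmem,
    finsum_mem_biUnion (hdisj.mono fun _ => inter_subset_left) Z.finite_toSet
      fun z hz => hfin.subset (inter_subset_inter_left _ (hB z hz)),
    finsum_mem_coe_finset]
  exact Finset.sum_congr rfl fun z _ => finsum_mem_inter_support _ _

end ZeroCount

theorem continuous_circleIntegral {X : Type*} [TopologicalSpace X] {F : X → ℂ → ℂ} {c : ℂ}
    {R : ℝ} (hR : 0 ≤ R) (hF : ContinuousOn (Function.uncurry F) (univ ×ˢ sphere c R)) :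
    Continuous fun x => ∮ z in C(c, R), F x z := by
  refine intervalIntegral.continuous_parametric_intervalIntegral_of_continuous' ?_ _ _
  simp only [deriv_circleMap]
  exact (((continuous_circleMap 0 R).comp continuous_snd).mul continuous_const).smul
    (hF.comp_continuous (continuous_fst.prodMk ((continuous_circleMap c R).comp continuous_snd))
      fun p => ⟨mem_univ _, circleMap_mem_sphere c hR p.2⟩)

theorem circleIntegral_logDeriv_id_sub_const {c z₀ : ℂ} {R : ℝ} (hz₀ : z₀ ∈ ball c R) :
    (∮ z in C(c, R), logDeriv (· - z₀) z) = 2 * Real.pi * Complex.I := by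
  simpa [logDeriv_apply] using circleIntegral.integral_sub_inv_of_mem_ball hz₀

namespace AnalyticOnNhd

variable {c : ℂ} {R : ℝ} {f g : ℂ → ℂ}

theorem analyticOrderAt_ne_top_of_sphere (hR : 0 < R) (hg : AnalyticOnNhd ℂ g (closedBall c R))
    (hs : ∀ z ∈ sphere c R, g z ≠ 0) : ∀ z ∈ closedBall c R, analyticOrderAt g z ≠ ⊤ := by
  rw [← closure_ball c hR.ne'] at hg ⊢
  rw [← frontier_ball c hR.ne'] at hs
  exact hg.analyticOrderAt_ne_top_of_frontier isOpen_ball isBounded_ball hs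

theorem finite_inter_support_of_sphere (hR : 0 < R) (hg : AnalyticOnNhd ℂ g (closedBall c R))
    (hs : ∀ z ∈ sphere c R, g z ≠ 0) :
    (ball c R ∩ Function.support (analyticOrderNatAt g)).Finite := by
  rw [← closure_ball c hR.ne'] at hg
  rw [← frontier_ball c hR.ne'] at hs
  exact hg.finite_inter_support_analyticOrderNatAt isOpen_ball isBounded_ball hs

theorem zeroCount_ball_mul (hf : AnalyticOnNhd ℂ f (closedBall c R)) (hR : 0 < R)
    (hfs : ∀ z ∈ sphere c R, f z ≠ 0) (hg : AnalyticOnNhd ℂ g (closedBall c R))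
    (hgs : ∀ z ∈ sphere c R, g z ≠ 0) :
    zeroCount (f * g) (ball c R) = zeroCount f (ball c R) + zeroCount g (ball c R) :=
  zeroCount_mul (hf.mono ball_subset_closedBall) (hg.mono ball_subset_closedBall)
    (fun z hz => hf.analyticOrderAt_ne_top_of_sphere hR hfs z (ball_subset_closedBall hz))
    (fun z hz => hg.analyticOrderAt_ne_top_of_sphere hR hgs z (ball_subset_closedBall hz))
    (hf.finite_inter_support_of_sphere hR hfs) (hg.finite_inter_support_of_sphere hR hgs)

theorem circleIntegral_logDeriv_mul (hf : AnalyticOnNhd ℂ f (closedBall c R)) (hR : 0 < R)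
    (hfs : ∀ z ∈ sphere c R, f z ≠ 0) (hg : AnalyticOnNhd ℂ g (closedBall c R))
    (hgs : ∀ z ∈ sphere c R, g z ≠ 0) :
    (∮ z in C(c, R), logDeriv (f * g) z) =
      (∮ z in C(c, R), logDeriv f z) + ∮ z in C(c, R), logDeriv g z := by
  have hsph : sphere c R ⊆ closedBall c R := sphere_subset_closedBall
  rw [← circleIntegral.integral_add
    (((hf.mono hsph).continuousOn_logDeriv hfs).circleIntegrable hR.le)
    (((hg.mono hsph).continuousOn_logDeriv hgs).circleIntegrable hR.le)]
  exact circleIntegral.integral_congr hR.le fun z hz => logDeriv_mul z (hfs z hz) (hgs z hz)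
    (hf z (hsph hz)).differentiableAt (hg z (hsph hz)).differentiableAt

theorem circleIntegral_logDeriv_eq_zero (hg : AnalyticOnNhd ℂ g (closedBall c R)) (hR : 0 < R)
    (h0 : ∀ z ∈ closedBall c R, g z ≠ 0) : (∮ z in C(c, R), logDeriv g z) = 0 := by
  refine DiffContOnCl.circleIntegral_eq_zero hR.le (DifferentiableOn.diffContOnCl ?_)
  rw [closure_ball c hR.ne']
  exact (hg.deriv.div hg h0).differentiableOn

theorem circleIntegral_logDeriv_eq_zeroCount (hg : AnalyticOnNhd ℂ g (closedBall c R))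
    (hR : 0 < R) (hs : ∀ z ∈ sphere c R, g z ≠ 0) :
    (∮ z in C(c, R), logDeriv g z) = 2 * Real.pi * Complex.I * zeroCount g (ball c R) := by
  induction hn : zeroCount g (ball c R) using Nat.strong_induction_on generalizing g with
  | _ n ih =>
  by_cases hzero : ∃ z₀ ∈ ball c R, g z₀ = 0
  · obtain ⟨z₀, hz₀, hgz₀⟩ := hzero
    have hfac : g = (· - z₀) * _root_.dslope g z₀ :=
      funext fun w => by simpa [hgz₀] using (sub_smul_dslope g z₀ w).symm
    have hlin : AnalyticOnNhd ℂ (· - z₀) (closedBall c R) := fun _ _ => by fun_prop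
    have hlins : ∀ z ∈ sphere c R, z - z₀ ≠ 0 := fun z hz h => by
      rw [sub_eq_zero] at h
      subst h
      exact (mem_ball.1 hz₀).ne (mem_sphere.1 hz)
    have hg₁ := hg.dslope (ball_subset_closedBall hz₀)
    have hg₁s : ∀ z ∈ sphere c R, _root_.dslope g z₀ z ≠ 0 := fun z hz h =>
      hs z hz (by rw [hfac, Pi.mul_apply, h, mul_zero])
    rw [hfac, hlin.zeroCount_ball_mul hR hlins hg₁ hg₁s, zeroCount_id_sub_const hz₀] at hn
    rw [hfac, hlin.circleIntegral_logDeriv_mul hR hlins hg₁ hg₁s,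
      circleIntegral_logDeriv_id_sub_const hz₀, ih _ (by omega) hg₁ hg₁s rfl, ← hn]
    push_cast
    ring
  · push Not at hzero
    have h0 : ∀ z ∈ closedBall c R, g z ≠ 0 := fun z hz => by
      rcases (mem_closedBall.1 hz).lt_or_eq with h | h
      exacts [hzero z h, hs z h]
    rw [← hn, zeroCount_eq_zero hzero, hg.circleIntegral_logDeriv_eq_zero hR h0]
    simp

end AnalyticOnNhd

theorem zeroCount_ball_eq_of_continuous_circleIntegral {X : Type*} [TopologicalSpace X]
    [PreconnectedSpace X] {c : ℂ} {R : ℝ} {H : X → ℂ → ℂ} (hR : 0 < R)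
    (hH : ∀ x, AnalyticOnNhd ℂ (H x) (closedBall c R)) (hHs : ∀ x, ∀ z ∈ sphere c R, H x z ≠ 0)
    (hcont : Continuous fun x => ∮ z in C(c, R), logDeriv (H x) z) (x y : X) :
    zeroCount (H x) (ball c R) = zeroCount (H y) (ball c R) := by
  have hcount : ∀ x, (zeroCount (H x) (ball c R) : ℝ) =
      ((2 * Real.pi * Complex.I)⁻¹ * ∮ z in C(c, R), logDeriv (H x) z).re := fun x => by
    rw [(hH x).circleIntegral_logDeriv_eq_zeroCount hR (hHs x),
      inv_mul_cancel_left₀ Complex.two_pi_I_ne_zero]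
    simp
  refine PreconnectedSpace.constant ‹_› (f := fun x => zeroCount (H x) (ball c R))
    (Nat.isClosedEmbedding_coe_real.continuous_iff.2 ?_)
  simp only [Function.comp_def, hcount]
  fun_prop

theorem zeroCount_ball_eq_of_norm_sub_lt {c : ℂ} {R : ℝ} {f g : ℂ → ℂ} (hR : 0 < R)
    (hf : AnalyticOnNhd ℂ f (closedBall c R)) (hg : AnalyticOnNhd ℂ g (closedBall c R))
    (hlt : ∀ z ∈ sphere c R, ‖f z - g z‖ < ‖g z‖) :
    zeroCount f (ball c R) = zeroCount g (ball c R) := by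
  set H : unitInterval → ℂ → ℂ := fun s z => g z + (s : ℂ) * (f z - g z) with hH_def
  have hHs : ∀ s, ∀ z ∈ sphere c R, H s z ≠ 0 := by
    intro s z hz h
    refine (hlt z hz).not_ge ?_
    calc ‖g z‖ = ‖(s : ℂ) * (f z - g z)‖ :=
        (congrArg norm (eq_neg_of_add_eq_zero_left h)).trans (norm_neg _)
      _ ≤ ‖f z - g z‖ := by
        rw [norm_mul, Complex.norm_real, Real.norm_of_nonneg s.2.1]
        exact mul_le_of_le_one_left (norm_nonneg _) s.2.2
  have hsph : sphere c R ⊆ closedBall c R := sphere_subset_closedBall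
  have hlog : ∀ s, ∀ z ∈ sphere c R,
      logDeriv (H s) z = (deriv g z + s * (deriv f z - deriv g z)) / H s z := by
    intro s z hz
    have hdf := (hf z (hsph hz)).differentiableAt
    have hdg := (hg z (hsph hz)).differentiableAt
    rw [logDeriv_apply, hH_def, deriv_fun_add hdg ((hdf.fun_sub hdg).const_mul _),
      deriv_const_mul _ (hdf.fun_sub hdg), deriv_fun_sub hdf hdg]
  have hcont : Continuous fun s => ∮ z in C(c, R), logDeriv (H s) z := by
    refine continuous_circleIntegral hR.le (ContinuousOn.congr ?_ fun p hp => hlog p.1 p.2 hp.2)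
    have hcomp : ∀ {φ : ℂ → ℂ}, ContinuousOn φ (closedBall c R) →
        ContinuousOn (fun p : unitInterval × ℂ => φ p.2) (univ ×ˢ sphere c R) :=
      fun h => (h.mono hsph).comp continuousOn_snd fun p hp => hp.2
    have hs : Continuous fun p : unitInterval × ℂ => ((p.1 : ℝ) : ℂ) := by fun_prop
    exact ((hcomp hg.deriv.continuousOn).add (hs.continuousOn.mul
      ((hcomp hf.deriv.continuousOn).sub (hcomp hg.deriv.continuousOn)))).div
      ((hcomp hg.continuousOn).add (hs.continuousOn.mul
        ((hcomp hf.continuousOn).sub (hcomp hg.continuousOn))))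
      fun p hp => hHs p.1 p.2 hp.2
  simpa [hH_def] using zeroCount_ball_eq_of_continuous_circleIntegral (H := H) hR
    (fun s z hz => (hg z hz).add (analyticAt_const.mul ((hf z hz).sub (hg z hz)))) hHs hcont 1 0

theorem exists_pos_forall_zeroCount_eq {U : Set ℂ} {g₀ : ℂ → ℂ} (hUo : IsOpen U)
    (hUb : Bornology.IsBounded U) (hg₀ : AnalyticOnNhd ℂ g₀ (closure U))
    (hfr : ∀ z ∈ frontier U, g₀ z ≠ 0) :
    ∃ ε > 0, ∀ g : ℂ → ℂ, AnalyticOnNhd ℂ g (closure U) →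
      (∀ z ∈ closure U, ‖g z - g₀ z‖ < ε) → zeroCount g U = zeroCount g₀ U := by
  have hfin₀ : {z ∈ U | g₀ z = 0}.Finite :=
    (hg₀.finite_setOf_eq_zero_of_frontier hUo hUb hfr).subset
      fun z hz => ⟨subset_closure hz.1, hz.2⟩
  set Z₀ := hfin₀.toFinset
  have hZ₀ : ∀ z, z ∈ Z₀ ↔ z ∈ U ∧ g₀ z = 0 := fun z => hfin₀.mem_toFinset
  obtain ⟨r, hr, hrU, hdisj⟩ :=
    exists_pos_pairwiseDisjoint_closedBall_subset hUo fun z hz => ((hZ₀ z).1 hz).1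
  set K := closure U \ ⋃ z ∈ Z₀, ball z r
  have hK0 : ∀ w ∈ K, 0 < ‖g₀ w‖ := by
    refine fun w hw => norm_pos_iff.2 fun h => hw.2 ?_
    by_cases hwU : w ∈ U
    · exact mem_biUnion ((hZ₀ w).2 ⟨hwU, h⟩) (mem_ball_self hr)
    · exact (hfr w ⟨hw.1, by rwa [hUo.interior_eq]⟩ h).elim
  obtain ⟨ε, hε, hεK⟩ := (hUb.isCompact_closure.diff
    (isOpen_biUnion fun _ _ => isOpen_ball)).exists_forall_le'
    (continuous_norm.comp_continuousOn (hg₀.continuousOn.mono sdiff_subset)) hK0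
  refine ⟨ε, hε, fun g hg hclose => ?_⟩
  have hgK : ∀ w ∈ K, ‖g w - g₀ w‖ < ‖g₀ w‖ := fun w hw => (hclose w hw.1).trans_le (hεK w hw)
  have hzeros : ∀ h : ℂ → ℂ, (∀ w ∈ K, h w ≠ 0) → ∀ w ∈ U, h w = 0 → ∃ z ∈ Z₀, w ∈ ball z r :=
    fun h hK w hw h0 => by simpa using not_not.1 fun hw' => hK w ⟨subset_closure hw, hw'⟩ h0
  have hg0 : ∀ w ∈ K, g w ≠ 0 := fun w hw h => by simpa [h] using hgK w hw
  have hfrK : frontier U ⊆ K := by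
    refine fun w hw => ⟨frontier_subset_closure hw, fun hmem => ?_⟩
    rw [hUo.frontier_eq] at hw
    obtain ⟨z, hz, hwz⟩ := mem_iUnion₂.1 hmem
    exact hw.2 (hrU z hz (ball_subset_closedBall hwz))
  have hsphere : ∀ z ∈ Z₀, sphere z r ⊆ K := fun z hz w hw =>
    ⟨subset_closure (hrU z hz (sphere_subset_closedBall hw)),
      disjoint_left.1 (disjoint_sphere_biUnion_ball hdisj hz) hw⟩
  have hUcl : ∀ z ∈ Z₀, closedBall z r ⊆ closure U := fun z hz => (hrU z hz).trans subset_closure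
  have hballs : ∀ z ∈ Z₀, ball z r ⊆ U := fun z hz => ball_subset_closedBall.trans (hrU z hz)
  have hdisj' := hdisj.mono fun _ => ball_subset_closedBall
  rw [zeroCount_eq_sum_of_pairwiseDisjoint hdisj' hballs (hzeros g hg0)
      (hg.finite_inter_support_analyticOrderNatAt hUo hUb fun w hw => hg0 w (hfrK hw)),
    zeroCount_eq_sum_of_pairwiseDisjoint hdisj' hballs
      (hzeros g₀ fun w hw => norm_pos_iff.1 (hK0 w hw))
      (hg₀.finite_inter_support_analyticOrderNatAt hUo hUb hfr)]
  exact Finset.sum_congr rfl fun z hz => zeroCount_ball_eq_of_norm_sub_lt hr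
    (hg.mono (hUcl z hz)) (hg₀.mono (hUcl z hz)) fun w hw => hgK w (hsphere z hz hw)

theorem continuousOn_zeroCount {X : Type*} [TopologicalSpace X] {T : Set X} {U : Set ℂ}
    {F : X → ℂ → ℂ} (hUo : IsOpen U) (hUb : Bornology.IsBounded U)
    (hF : ContinuousOn (Function.uncurry F) (T ×ˢ closure U))
    (han : ∀ t ∈ T, AnalyticOnNhd ℂ (F t) (closure U))
    (hfr : ∀ t ∈ T, ∀ z ∈ frontier U, F t z ≠ 0) :
    ContinuousOn (fun t => zeroCount (F t) U) T := by
  intro t₀ ht₀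
  obtain ⟨ε, hε, hstable⟩ := exists_pos_forall_zeroCount_eq hUo hUb (han t₀ ht₀) (hfr t₀ ht₀)
  obtain ⟨v, hv, hvε⟩ :=
    hUb.isCompact_closure.mem_uniformity_of_prod hF ht₀ (dist_mem_uniformity hε)
  rw [ContinuousWithinAt, nhds_discrete, tendsto_pure]
  filter_upwards [hv, self_mem_nhdsWithin] with t htv htT
  exact hstable _ (han t htT) fun z hz => by simpa [dist_eq_norm] using hvε t htv z hz

theorem stmt_2_general (V : Set ℂ) (U : Set ℂ)
    (hUo : IsOpen U) (hUb : Bornology.IsBounded U) (hUV : closure U ⊆ V)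
    (f : ℂ → ℝ → ℂ)
    (hcont : ContinuousOn (fun p : ℂ × ℝ => f p.1 p.2) (V ×ˢ Set.Icc (0 : ℝ) 1))
    (han : ∀ t ∈ Set.Icc (0 : ℝ) 1, AnalyticOnNhd ℂ (fun z => f z t) V)
    (hbd : ∀ z ∈ frontier U, ∀ t ∈ Set.Icc (0 : ℝ) 1, f z t ≠ 0) :
    (∀ t ∈ Set.Icc (0 : ℝ) 1, {z ∈ U | f z t = 0}.Finite) ∧
    ∃ N : ℕ, ∀ t ∈ Set.Icc (0 : ℝ) 1, ∀ Z : Finset ℂ,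
      (↑Z = {z ∈ U | f z t = 0}) →
      ∃ ord : ℂ → ℕ,
        (∀ z ∈ Z, ∃ h : ℂ → ℂ, AnalyticAt ℂ h z ∧ h z ≠ 0 ∧
          ∀ᶠ w in nhds z, f w t = (w - z) ^ ord z * h w) ∧
        ∑ z ∈ Z, ord z = N := by
  have han' : ∀ t ∈ Icc (0 : ℝ) 1, AnalyticOnNhd ℂ (fun z => f z t) (closure U) :=
    fun t ht => (han t ht).mono hUV
  have hfr : ∀ t ∈ Icc (0 : ℝ) 1, ∀ z ∈ frontier U, f z t ≠ 0 := fun t ht z hz => hbd z hz t ht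
  have hN : ContinuousOn (fun t => zeroCount (fun z => f z t) U) (Icc 0 1) :=
    continuousOn_zeroCount hUo hUb
      (hcont.comp continuous_swap.continuousOn fun p hp => ⟨hUV hp.2, hp.1⟩) han' hfr
  refine ⟨fun t ht => ((han' t ht).finite_setOf_eq_zero_of_frontier hUo hUb (hfr t ht)).subset
    fun z hz => ⟨subset_closure hz.1, hz.2⟩, zeroCount (fun z => f z 0) U,
    fun t ht Z hZ => ⟨analyticOrderNatAt (fun z => f z t), fun z hz => ?_, ?_⟩⟩
  · have hz' : z ∈ {z ∈ U | f z t = 0} := hZ ▸ Finset.mem_coe.2 hz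
    obtain ⟨h, hh, hh0, hfh⟩ := ((han' t ht z (subset_closure hz'.1)).analyticOrderAt_ne_top).1
      ((han' t ht).analyticOrderAt_ne_top_of_frontier hUo hUb (hfr t ht) z (subset_closure hz'.1))
    exact ⟨h, hh, hh0, by simpa [EventuallyEq] using hfh⟩
  · rw [← zeroCount_eq_sum_analyticOrderNatAt hZ]
    exact isPreconnected_Icc.constant hN ht (left_mem_Icc.2 zero_le_one)

/-- Homotopy invariance of the number of zeros (counted with multiplicity) of a continuous
one-parameter family of analytic functions with no zeros on the frontier of `U`. -/
theorem stmt_2 (V : Set ℂ) (hV : IsOpen V) (U : Set ℂ) (hUne : U.Nonempty)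
    (hUo : IsOpen U) (hUb : Bornology.IsBounded U) (hUV : closure U ⊆ V)
    (f : ℂ → ℝ → ℂ)
    (hcont : ContinuousOn (fun p : ℂ × ℝ => f p.1 p.2) (V ×ˢ Set.Icc (0 : ℝ) 1))
    (han : ∀ t ∈ Set.Icc (0 : ℝ) 1, AnalyticOnNhd ℂ (fun z => f z t) V)
    (hbd : ∀ z ∈ frontier U, ∀ t ∈ Set.Icc (0 : ℝ) 1, f z t ≠ 0) :
    (∀ t ∈ Set.Icc (0 : ℝ) 1, {z ∈ U | f z t = 0}.Finite) ∧
    ∃ N : ℕ, ∀ t ∈ Set.Icc (0 : ℝ) 1, ∀ Z : Finset ℂ,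
      (↑Z = {z ∈ U | f z t = 0}) →
      ∃ ord : ℂ → ℕ,
        (∀ z ∈ Z, ∃ h : ℂ → ℂ, AnalyticAt ℂ h z ∧ h z ≠ 0 ∧
          ∀ᶠ w in nhds z, f w t = (w - z) ^ ord z * h w) ∧
        ∑ z ∈ Z, ord z = N :=
  stmt_2_general V U hUo hUb hUV f hcont han hbd
end

section
/- Let n ≥ 1, let a₀, a₁ be n×n complex matrices, let λ ∈ ℂ, and let A₁(λ) be the 2n×2n complex block matrix with blocks A₁(λ) = [[0, I_n], [λ·I_n − a₀, −a₁]]. Then the linear system X' = A₁(λ)X admits an exponential dichotomy — i.e. there exist a 2n×2n matrix P with P·P = P and P·A₁(λ) = A₁(λ)·P, and constants K ≥ 1, α > 0, such that ‖exp(t•A₁(λ))·P‖ ≤ K·exp(−α·t) for all t ≥ 0 and ‖exp(t•A₁(λ))·(1 − P)‖ ≤ K·exp(α·t) for all t ≤ 0 — if and only if for every μ ∈ ℝ one has det(λ·I_n − (a₀ − μ²·I_n + i·μ·a₁)) ≠ 0. -/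
/-!
`A₁(λ)` has the eigenvalue `iμ` exactly when `det (λ - (a₀ - μ² + iμ a₁)) = 0`: after a block
column operation, `iμ - A₁(λ)` is the symplectic `J` times a block-triangular matrix with that
quadratic pencil as a diagonal block.

A dichotomy excludes eigenvectors `w` for purely imaginary eigenvalues, since `exp (tA)` acts on
`P w` and `(1 - P) w` by unimodular scalars while the two bounds force them to decay.

Conversely, if the characteristic polynomial has no purely imaginary root, split it into the
factors with roots in the left and in the right half-plane. A Bézout combination of the two
factors, evaluated at `A`, is a projection `P` commuting with `A`. By Bézout again, the range of
`P` decomposes into primary components `(A - ρ)ᵐ q = 0` with `Re ρ < 0`, on which `exp (tA) q` is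
`e^{ρt}` times a polynomial in `t`, and similarly for `1 - P`.
-/

open scoped Matrix

attribute [local instance] Matrix.linftyOpNormedAddCommGroup

open scoped Nat
open Polynomial NormedSpace Filter

section PrimaryDecomposition

variable {K R : Type*} [Field K] [Ring R] [Algebra K R]

theorem AddSubmonoid.mem_of_aeval_prod_mul_eq_zero {a : R} (S : AddSubmonoid R) {s : Finset K}
    {m : K → ℕ} (hS : ∀ ρ ∈ s, ∀ q, (a - algebraMap K R ρ) ^ m ρ * q = 0 → q ∈ S) {q : R}
    (hq : aeval a (∏ ρ ∈ s, (X - C ρ) ^ m ρ) * q = 0) : q ∈ S := by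
  classical
  induction s using Finset.induction_on generalizing q with
  | empty =>
    rw [show q = 0 by simpa using hq]
    exact S.zero_mem
  | insert ρ s hρ ih =>
    set f := (X - C ρ) ^ m ρ
    set g := ∏ ν ∈ s, (X - C ν) ^ m ν
    obtain ⟨u, v, huv⟩ : IsCoprime f g := IsCoprime.prod_right fun ν hν =>
      (isCoprime_X_sub_C_of_isUnit_sub (sub_ne_zero.2 (ne_of_mem_of_not_mem hν hρ).symm).isUnit).pow
    rw [Finset.prod_insert hρ] at hq
    have hkill : ∀ r : K[X], aeval a (r * (f * g)) * q = 0 := fun r => by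
      rw [map_mul, mul_assoc, hq, mul_zero]
    have hsplit : q = aeval a (u * f) * q + aeval a (v * g) * q := by
      rw [← add_mul, ← map_add, huv, map_one, one_mul]
    rw [hsplit]
    refine S.add_mem (ih (fun ν hν => hS ν (Finset.mem_insert_of_mem hν)) ?_)
      (hS ρ (Finset.mem_insert_self ρ s) _ ?_)
    · rw [← mul_assoc, ← map_mul, show g * (u * f) = u * (f * g) by ring, hkill]
    · have hf : (a - algebraMap K R ρ) ^ m ρ = aeval a f := by simp [f]
      rw [hf, ← mul_assoc, ← map_mul, show f * (v * g) = v * (f * g) by ring, hkill]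

theorem exists_isIdempotentElem_of_isCoprime_s3 {a : R} {f g : K[X]} (hfg : IsCoprime f g)
    (h : aeval a (f * g) = 0) :
    ∃ P : R, P * P = P ∧ P * a = a * P ∧ aeval a f * P = 0 ∧ aeval a g * (1 - P) = 0 := by
  obtain ⟨u, v, huv⟩ := hfg
  have hkill : ∀ r : K[X], aeval a (r * (f * g)) = 0 := fun r => by rw [map_mul, h, mul_zero]
  have hcompl : 1 - aeval a (v * g) = aeval a (u * f) := by
    rw [← map_one (aeval (R := K) a), ← huv, map_add, add_sub_cancel_right]
  refine ⟨aeval a (v * g), ?_, ?_, ?_, ?_⟩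
  · have h0 : aeval a (v * g) * (1 - aeval a (v * g)) = 0 := by
      rw [hcompl, ← map_mul, show v * g * (u * f) = v * u * (f * g) by ring, hkill]
    rwa [mul_sub, mul_one, sub_eq_zero, eq_comm] at h0
  · simpa using ((Commute.all (v * g) X).map (aeval a)).eq
  · rw [← map_mul, show f * (v * g) = v * (f * g) by ring, hkill]
  · rw [hcompl, ← map_mul, show g * (u * f) = u * (f * g) by ring, hkill]

theorem Polynomial.aeval_prod_roots_eq_zero [IsAlgClosed K] [DecidableEq K] {a : R} {p : K[X]}
    (hp : p ≠ 0) (h : aeval a p = 0) :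
    aeval a (∏ ρ ∈ p.roots.toFinset, (X - C ρ) ^ p.roots.count ρ) = 0 := by
  rw [(IsAlgClosed.splits p).eq_prod_roots, Finset.prod_multiset_map_count, map_mul, aeval_C,
    ← Algebra.smul_def] at h
  exact (smul_eq_zero_iff_right (leadingCoeff_ne_zero.2 hp)).1 h

end PrimaryDecomposition

theorem Finset.exists_pos_forall_lt {ι : Type*} {s : Finset ι} {f : ι → ℝ}
    (hf : ∀ i ∈ s, 0 < f i) : ∃ α > 0, ∀ i ∈ s, α < f i := by
  have h : ∀ᶠ α in nhdsWithin (0 : ℝ) (Set.Ioi 0), ∀ i ∈ s, α < f i :=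
    (eventually_all_finset s).2 fun i hi => nhdsWithin_le_nhds (eventually_lt_nhds (hf i hi))
  exact (h.and self_mem_nhdsWithin).exists.imp fun α h => ⟨h.2, h.1⟩

theorem pow_div_factorial_le_inv_pow_mul_exp {δ t : ℝ} (hδ : 0 < δ) (ht : 0 ≤ t) (k : ℕ) :
    t ^ k / k ! ≤ δ⁻¹ ^ k * Real.exp (δ * t) := by
  have h := Real.pow_div_factorial_le_exp _ (mul_nonneg hδ.le ht) k
  rw [mul_pow, mul_div_assoc] at h
  rwa [inv_pow, le_inv_mul_iff₀ (by positivity)]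

section ExpDichotomy

variable {𝔸 : Type*} [NormedRing 𝔸] [NormedAlgebra ℂ 𝔸]

def exponentiallyDecaying (a : 𝔸) (α : ℝ) : AddSubmonoid 𝔸 where
  carrier := {q | ∃ C : ℝ, ∀ t : ℝ, 0 ≤ t → ‖exp ((t : ℂ) • a) * q‖ ≤ C * Real.exp (-α * t)}
  add_mem' := by
    rintro q r ⟨C, hC⟩ ⟨D, hD⟩
    refine ⟨C + D, fun t ht => ?_⟩
    rw [mul_add, add_mul]
    exact (norm_add_le _ _).trans (add_le_add (hC t ht) (hD t ht))
  zero_mem' := ⟨0, fun t _ => by simp⟩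

def HasExpDichotomy (a : 𝔸) : Prop :=
  ∃ (P : 𝔸) (K α : ℝ), P * P = P ∧ P * a = a * P ∧ 1 ≤ K ∧ 0 < α ∧
    (∀ t : ℝ, 0 ≤ t → ‖exp ((t : ℂ) • a) * P‖ ≤ K * Real.exp (-α * t)) ∧
    (∀ t : ℝ, t ≤ 0 → ‖exp ((t : ℂ) • a) * (1 - P)‖ ≤ K * Real.exp (α * t))

theorem hasExpDichotomy_iff {a : 𝔸} :
    HasExpDichotomy a ↔ ∃ P : 𝔸, P * P = P ∧ P * a = a * P ∧
      ∃ α > 0, P ∈ exponentiallyDecaying a α ∧ 1 - P ∈ exponentiallyDecaying (-a) α := by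
  have hflip : ∀ t : ℝ, (t : ℂ) • -a = ((-t : ℝ) : ℂ) • a := fun t => by
    rw [Complex.ofReal_neg, neg_smul, smul_neg]
  constructor
  · rintro ⟨P, K, α, hPP, hPa, -, hα, hs, hu⟩
    refine ⟨P, hPP, hPa, α, hα, ⟨K, hs⟩, K, fun t ht => ?_⟩
    rw [hflip, show -α * t = α * -t by ring]
    exact hu (-t) (neg_nonpos.2 ht)
  · rintro ⟨P, hPP, hPa, α, hα, ⟨C, hC⟩, ⟨D, hD⟩⟩
    have hK : C ≤ max 1 (max C D) ∧ D ≤ max 1 (max C D) :=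
      ⟨le_max_of_le_right (le_max_left _ _), le_max_of_le_right (le_max_right _ _)⟩
    refine ⟨P, max 1 (max C D), α, hPP, hPa, le_max_left _ _, hα, fun t ht => ?_, fun t ht => ?_⟩
    · exact (hC t ht).trans (by gcongr; exact hK.1)
    · have h := hD (-t) (neg_nonneg.2 ht)
      rw [hflip, neg_neg, show -α * -t = α * t by ring] at h
      exact h.trans (by gcongr; exact hK.2)

variable [CompleteSpace 𝔸]

theorem exp_mul_eq_sum_range_of_pow_mul_eq_zero {b q : 𝔸} {m : ℕ} (h : b ^ m * q = 0) :
    exp b * q = ∑ k ∈ Finset.range m, (k !⁻¹ : ℂ) • (b ^ k * q) := by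
  rw [exp_eq_tsum ℂ]
  dsimp only
  rw [← (expSeries_summable' (𝕂 := ℂ) b).tsum_mul_right q]
  simp_rw [smul_mul_assoc]
  apply tsum_eq_sum
  intro k hk
  rw [Finset.mem_range, not_lt] at hk
  rw [← Nat.sub_add_cancel hk, pow_add, mul_assoc, h, mul_zero, smul_zero]

theorem exp_smul_mul_eq_of_pow_mul_eq_zero {a q : 𝔸} {ρ : ℂ} {m : ℕ}
    (h : (a - algebraMap ℂ 𝔸 ρ) ^ m * q = 0) (z : ℂ) :
    exp (z • a) * q = Complex.exp (z * ρ) •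
      ∑ k ∈ Finset.range m, (z ^ k / k !) • ((a - algebraMap ℂ 𝔸 ρ) ^ k * q) := by
  set b := a - algebraMap ℂ 𝔸 ρ
  have hsplit : z • a = algebraMap ℂ 𝔸 (z * ρ) + z • b := by
    rw [smul_sub, Algebra.smul_def z (algebraMap ℂ 𝔸 ρ), ← map_mul]
    abel
  have hzb : (z • b) ^ m * q = 0 := by rw [_root_.smul_pow, smul_mul_assoc, h, smul_zero]
  have hball : ∀ x : 𝔸, x ∈ Metric.eball 0 (expSeries ℂ 𝔸).radius := fun x =>
    (expSeries_radius_eq_top ℂ 𝔸).symm ▸ edist_lt_top _ _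
  rw [hsplit, exp_add_of_commute_of_mem_ball (Algebra.commutes _ _) (hball _) (hball _),
    ← algebraMap_exp_comm, ← Complex.exp_eq_exp_ℂ, mul_assoc,
    exp_mul_eq_sum_range_of_pow_mul_eq_zero hzb, ← Algebra.smul_def]
  congr 1
  refine Finset.sum_congr rfl fun k _ => ?_
  rw [_root_.smul_pow, smul_mul_assoc, smul_smul, div_eq_inv_mul]

theorem exp_smul_mul_eq_of_mul_eq_smul {a w : 𝔸} {ρ : ℂ} (h : a * w = ρ • w) (z : ℂ) :
    exp (z • a) * w = Complex.exp (z * ρ) • w := by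
  have h1 : (a - algebraMap ℂ 𝔸 ρ) ^ 1 * w = 0 := by
    rw [pow_one, sub_mul, ← Algebra.smul_def, h, sub_self]
  simpa using exp_smul_mul_eq_of_pow_mul_eq_zero h1 z

theorem mem_exponentiallyDecaying_of_pow_mul_eq_zero {a q : 𝔸} {ρ : ℂ} {m : ℕ} {α : ℝ}
    (h : (a - algebraMap ℂ 𝔸 ρ) ^ m * q = 0) (hα : α < -ρ.re) :
    q ∈ exponentiallyDecaying a α := by
  set b := a - algebraMap ℂ 𝔸 ρ
  set δ := -ρ.re - α
  have hδ : 0 < δ := sub_pos.2 hα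
  refine ⟨∑ k ∈ Finset.range m, δ⁻¹ ^ k * ‖b ^ k * q‖, fun t ht => ?_⟩
  have hcoeff : ∀ k : ℕ, ‖((t : ℂ) ^ k / k ! : ℂ)‖ = t ^ k / k ! := fun k => by
    rw [norm_div, norm_pow, Complex.norm_real, Real.norm_of_nonneg ht, Complex.norm_natCast]
  calc ‖exp ((t : ℂ) • a) * q‖
      = Real.exp (ρ.re * t) * ‖∑ k ∈ Finset.range m, ((t : ℂ) ^ k / k !) • (b ^ k * q)‖ := by
        rw [exp_smul_mul_eq_of_pow_mul_eq_zero h, norm_smul, Complex.norm_exp, Complex.mul_re,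
          Complex.ofReal_re, Complex.ofReal_im, zero_mul, sub_zero, mul_comm t, mul_comm]
    _ ≤ Real.exp (ρ.re * t) * ∑ k ∈ Finset.range m, δ⁻¹ ^ k * Real.exp (δ * t) * ‖b ^ k * q‖ := by
        gcongr
        refine (norm_sum_le _ _).trans (Finset.sum_le_sum fun k _ => ?_)
        rw [norm_smul, hcoeff]
        gcongr
        exact pow_div_factorial_le_inv_pow_mul_exp hδ ht k
    _ = (∑ k ∈ Finset.range m, δ⁻¹ ^ k * ‖b ^ k * q‖) * Real.exp (-α * t) := by
        rw [Finset.mul_sum, Finset.sum_mul]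
        refine Finset.sum_congr rfl fun k _ => ?_
        rw [show -α * t = ρ.re * t + δ * t by ring, Real.exp_add]
        ring

theorem mul_eq_zero_of_mem_exponentiallyDecaying {a q w : 𝔸} {z : ℂ} {α : ℝ} (hα : 0 < α)
    (hq : q ∈ exponentiallyDecaying a α) (hqa : q * a = a * q) (hw : a * w = z • w)
    (hz : z.re = 0) : q * w = 0 := by
  obtain ⟨C, hC⟩ := hq
  have hqw : a * (q * w) = z • (q * w) := by rw [← mul_assoc, ← hqa, mul_assoc, hw, mul_smul_comm]
  have hbound : ∀ t : ℝ, 0 ≤ t → ‖q * w‖ ≤ C * ‖w‖ * Real.exp (-α * t) := fun t ht => calc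
    ‖q * w‖ = ‖exp ((t : ℂ) • a) * (q * w)‖ := by
      rw [exp_smul_mul_eq_of_mul_eq_smul hqw, norm_smul, Complex.norm_exp]
      simp [hz]
    _ ≤ ‖exp ((t : ℂ) • a) * q‖ * ‖w‖ := by rw [← mul_assoc]; exact norm_mul_le _ _
    _ ≤ C * Real.exp (-α * t) * ‖w‖ := by gcongr; exact hC t ht
    _ = C * ‖w‖ * Real.exp (-α * t) := by ring
  have hlim : Tendsto (fun t => C * ‖w‖ * Real.exp (-α * t)) atTop (nhds 0) := by
    simpa using (Real.tendsto_exp_atBot.comp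
      (tendsto_id.const_mul_atTop_of_neg (neg_lt_zero.2 hα))).const_mul (C * ‖w‖)
  exact norm_le_zero_iff.1 (ge_of_tendsto hlim ((eventually_ge_atTop 0).mono hbound))

theorem HasExpDichotomy.eq_zero_of_mul_eq_smul {a w : 𝔸} {z : ℂ} (h : HasExpDichotomy a)
    (hw : a * w = z • w) (hz : z.re = 0) : w = 0 := by
  obtain ⟨P, -, hPa, α, hα, hs, hu⟩ := hasExpDichotomy_iff.1 h
  have hPw : P * w = 0 := mul_eq_zero_of_mem_exponentiallyDecaying hα hs hPa hw hz
  have hQw : (1 - P) * w = 0 := by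
    refine mul_eq_zero_of_mem_exponentiallyDecaying (z := -z) hα hu ?_ ?_ (by simp [hz])
    · rw [mul_neg, neg_mul, sub_mul, mul_sub, one_mul, mul_one, hPa]
    · rw [neg_mul, hw, neg_smul]
  calc w = (1 - P) * w + P * w := by rw [← add_mul, sub_add_cancel, one_mul]
    _ = 0 := by rw [hPw, hQw, add_zero]

theorem hasExpDichotomy_of_aeval_eq_zero {a : 𝔸} {p : ℂ[X]} (hp : p ≠ 0) (hpa : aeval a p = 0)
    (hroots : ∀ ρ ∈ p.roots, ρ.re ≠ 0) : HasExpDichotomy a := by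
  classical
  set s := p.roots.toFinset
  set f : ℂ → ℂ[X] := fun ρ => (X - C ρ) ^ p.roots.count ρ
  obtain ⟨α, hα, hαs⟩ := Finset.exists_pos_forall_lt (s := s) (f := fun ρ => |ρ.re|)
    fun ρ hρ => abs_pos.2 (hroots ρ (Multiset.mem_toFinset.1 hρ))
  have hcop : IsCoprime (∏ ρ ∈ s with ρ.re < 0, f ρ) (∏ ρ ∈ s with ¬ ρ.re < 0, f ρ) :=
    IsCoprime.prod_left fun ρ hρ => IsCoprime.prod_right fun ν hν =>
      (isCoprime_X_sub_C_of_isUnit_sub (sub_ne_zero.2 fun hρν => (Finset.mem_filter.1 hν).2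
        (by rw [← hρν]; exact (Finset.mem_filter.1 hρ).2)).isUnit).pow
  obtain ⟨P, hPP, hPa, hPs, hPu⟩ := exists_isIdempotentElem_of_isCoprime_s3 hcop
    (by rw [Finset.prod_filter_mul_prod_filter_not]; exact aeval_prod_roots_eq_zero hp hpa)
  refine hasExpDichotomy_iff.2 ⟨P, hPP, hPa, α, hα, ?_, ?_⟩
  · refine AddSubmonoid.mem_of_aeval_prod_mul_eq_zero _ (fun ρ hρ q hq => ?_) hPs
    obtain ⟨hρs, hρ⟩ := Finset.mem_filter.1 hρ
    refine mem_exponentiallyDecaying_of_pow_mul_eq_zero hq ?_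
    linarith [hαs ρ hρs, abs_of_neg hρ]
  · refine AddSubmonoid.mem_of_aeval_prod_mul_eq_zero _ (fun ρ hρ q hq => ?_) hPu
    obtain ⟨hρs, hρ⟩ := Finset.mem_filter.1 hρ
    refine mem_exponentiallyDecaying_of_pow_mul_eq_zero (ρ := -ρ) (m := p.roots.count ρ) ?_ ?_
    · rw [map_neg, sub_neg_eq_add, neg_add_eq_sub, ← neg_sub, neg_pow, mul_assoc, hq, mul_zero]
    · linarith [hαs ρ hρs, abs_of_nonneg (not_lt.1 hρ), Complex.neg_re ρ]

end ExpDichotomy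

namespace Matrix

variable {n : Type*} [Fintype n] [DecidableEq n]

theorem det_smul_one_sub_fromBlocks {R : Type*} [CommRing R] (z : R) (B D : Matrix n n R) :
    det (z • 1 - fromBlocks 0 1 B D) = det (J n R) * det (z ^ 2 • 1 - z • D - B) := by
  have hM : z • 1 - fromBlocks 0 1 B D =
      fromBlocks (z • 1 : Matrix n n R) (-1) (-B) (z • 1 - D) := by
    rw [← fromBlocks_one, fromBlocks_smul, sub_eq_add_neg, fromBlocks_neg, fromBlocks_add]
    simp [sub_eq_add_neg]
  have hfactor : fromBlocks (z • 1 : Matrix n n R) (-1) (-B) (z • 1 - D) *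
      fromBlocks 1 0 (z • 1) 1 = J n R * fromBlocks (z ^ 2 • 1 - z • D - B) (z • 1 - D) 0 1 := by
    simp only [J, fromBlocks_multiply]
    congr 1 <;> simp
    module
  have := congrArg det hfactor
  rw [det_mul, det_mul, det_fromBlocks_zero₁₂, det_fromBlocks_zero₂₁] at this
  rw [hM]
  simpa using this

theorem exists_mul_eq_smul_of_det_eq_zero {K : Type*} [Field K] {A : Matrix n n K} {z : K}
    (h : det (z • 1 - A) = 0) : ∃ W : Matrix n n K, W ≠ 0 ∧ A * W = z • W := by
  obtain ⟨v, hv, hAv⟩ := exists_mulVec_eq_zero_iff.2 h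
  obtain ⟨i, hi⟩ := Function.ne_iff.1 hv
  rw [sub_mulVec, smul_mulVec, one_mulVec, sub_eq_zero] at hAv
  refine ⟨replicateCol n v, fun hW => hi (by simpa using congrFun (congrFun hW i) i), ?_⟩
  rw [← replicateCol_mulVec, ← hAv, replicateCol_smul]

theorem det_smul_one_sub_eq_zero_of_mem_roots_charpoly_s3 {K : Type*} [Field K] {A : Matrix n n K}
    {ρ : K} (h : ρ ∈ A.charpoly.roots) : det (ρ • 1 - A) = 0 := by
  have := (mem_roots A.charpoly_monic.ne_zero).1 h
  rwa [IsRoot, eval_charpoly, scalar_apply, ← smul_one_eq_diagonal] at this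

theorem det_dispersion_eq_zero_iff (a₀ a₁ : Matrix n n ℂ) (l : ℂ) (μ : ℝ) :
    det (l • 1 - (a₀ - ((μ : ℂ) ^ 2) • 1 + (Complex.I * μ) • a₁)) = 0 ↔
      det ((Complex.I * μ) • 1 - fromBlocks 0 1 (l • 1 - a₀) (-a₁)) = 0 := by
  have hneg : (Complex.I * μ) ^ 2 • (1 : Matrix n n ℂ) - (Complex.I * μ) • -a₁ - (l • 1 - a₀) =
      -(l • 1 - (a₀ - ((μ : ℂ) ^ 2) • 1 + (Complex.I * μ) • a₁)) := by
    rw [mul_pow, Complex.I_sq, neg_one_mul, neg_smul, smul_neg]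
    abel
  rw [det_smul_one_sub_fromBlocks, (isUnit_det_J _ _).mul_right_eq_zero, hneg, det_neg,
    mul_eq_zero, or_iff_right (pow_ne_zero _ (neg_ne_zero.2 one_ne_zero))]

end Matrix

theorem stmt_3_general (n : ℕ) (a₀ a₁ : Matrix (Fin n) (Fin n) ℂ) (l : ℂ)
    (A : Matrix (Fin n ⊕ Fin n) (Fin n ⊕ Fin n) ℂ)
    (hA : A = Matrix.fromBlocks 0 1 (l • 1 - a₀) (-a₁)) :
    (∃ (P : Matrix (Fin n ⊕ Fin n) (Fin n ⊕ Fin n) ℂ) (K α : ℝ),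
      P * P = P ∧ P * A = A * P ∧ 1 ≤ K ∧ 0 < α ∧
      (∀ t : ℝ, 0 ≤ t → ‖NormedSpace.exp (t • A) * P‖ ≤ K * Real.exp (-α * t)) ∧
      (∀ t : ℝ, t ≤ 0 → ‖NormedSpace.exp (t • A) * (1 - P)‖ ≤ K * Real.exp (α * t))) ↔
    (∀ μ : ℝ, (l • (1 : Matrix (Fin n) (Fin n) ℂ)
        - (a₀ - ((μ : ℂ) ^ 2) • 1 + (Complex.I * (μ : ℂ)) • a₁)).det ≠ 0) := by
  let : NormedRing (Matrix (Fin n ⊕ Fin n) (Fin n ⊕ Fin n) ℂ) := Matrix.linftyOpNormedRing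
  let : NormedAlgebra ℂ (Matrix (Fin n ⊕ Fin n) (Fin n ⊕ Fin n) ℂ) :=
    Matrix.linftyOpNormedAlgebra
  simp only [← Complex.coe_smul]
  change HasExpDichotomy A ↔ _
  subst hA
  constructor
  · intro h μ hμ
    obtain ⟨W, hW, hAW⟩ :=
      Matrix.exists_mul_eq_smul_of_det_eq_zero ((Matrix.det_dispersion_eq_zero_iff a₀ a₁ l μ).1 hμ)
    exact hW (h.eq_zero_of_mul_eq_smul hAW (by simp))
  · intro h
    refine hasExpDichotomy_of_aeval_eq_zero (Matrix.charpoly_monic _).ne_zero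
      (Matrix.aeval_self_charpoly _) fun ρ hρ hre =>
        h ρ.im ((Matrix.det_dispersion_eq_zero_iff a₀ a₁ l ρ.im).2 ?_)
    rw [show Complex.I * ρ.im = ρ by apply Complex.ext <;> simp [hre]]
    exact Matrix.det_smul_one_sub_eq_zero_of_mem_roots_charpoly_s3 hρ

/-- The system `X' = A₁(λ)X`, with `A₁(λ) = [[0, I], [λI - a₀, -a₁]]`, admits an exponential
dichotomy iff `det (λI - (a₀ - μ²I + iμ a₁)) ≠ 0` for all real `μ`. -/
theorem stmt_3 (n : ℕ) (hn : 1 ≤ n) (a₀ a₁ : Matrix (Fin n) (Fin n) ℂ) (l : ℂ)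
    (A : Matrix (Fin n ⊕ Fin n) (Fin n ⊕ Fin n) ℂ)
    (hA : A = Matrix.fromBlocks 0 1 (l • 1 - a₀) (-a₁)) :
    (∃ (P : Matrix (Fin n ⊕ Fin n) (Fin n ⊕ Fin n) ℂ) (K α : ℝ),
      P * P = P ∧ P * A = A * P ∧ 1 ≤ K ∧ 0 < α ∧
      (∀ t : ℝ, 0 ≤ t → ‖NormedSpace.exp (t • A) * P‖ ≤ K * Real.exp (-α * t)) ∧
      (∀ t : ℝ, t ≤ 0 → ‖NormedSpace.exp (t • A) * (1 - P)‖ ≤ K * Real.exp (α * t))) ↔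
    (∀ μ : ℝ, (l • (1 : Matrix (Fin n) (Fin n) ℂ)
        - (a₀ - ((μ : ℂ) ^ 2) • 1 + (Complex.I * (μ : ℂ)) • a₁)).det ≠ 0) :=
  stmt_3_general n a₀ a₁ l A hA
end

section
/- Let m, k ≥ 1. Let a₁₁, b₁₁ be m×m complex matrices, b₁₂ an m×k complex matrix, a₂₁, b₂₁ be k×m complex matrices, and a₂₂, b₂₂ be k×k complex matrices with a₂₂ invertible. For λ ∈ ℂ let A₂(λ) be the (2m+k)×(2m+k) complex block matrix with block rows [[0, I_m, 0], [λ·I_m − b₁₁, −a₁₁, −b₁₂], [−a₂₂⁻¹·b₂₁, −a₂₂⁻¹·a₂₁, a₂₂⁻¹·(λ·I_k − b₂₂)]]. Then for all λ, μ ∈ ℂ: det(a₂₂) · det(i·μ·I_{2m+k} − A₂(λ)) = (−1)^{m+k} · det of the (m+k)×(m+k) block matrix [[(λ + μ²)·I_m − i·μ·a₁₁ − b₁₁, −b₁₂], [−(b₂₁ + i·μ·a₂₁), λ·I_k − i·μ·a₂₂ − b₂₂]]. -/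
/-!
Left multiplication by `diag(I, I, a₂₂)` clears the inverses of `a₂₂` from `iμ I - A₂(λ)`. In the
result the first block row is `[iμ I, -I, 0]`; a unimodular column operation on the `(u, u')`
columns turns it into `[I, 0, 0]`, so the determinant collapses to that of the `(m + k)`-square
block obtained by substituting `u' = iμ u`, which is `-Δ₂(λ, μ)` since `(iμ)² = -μ²`.
-/

open Matrix

section

variable {R : Type*} [CommRing R] {m n : Type*} [Fintype m] [Fintype n] [DecidableEq m]
  [DecidableEq n]

theorem det_fromBlocks_smul_one_neg_one (ν : R) (P Q : Matrix m m R) (B : Matrix m n R)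
    (S T : Matrix n m R) (U : Matrix n n R) :
    (fromBlocks (fromBlocks (ν • 1) (-1) P Q) (fromRows 0 B) (fromCols S T) U).det =
      (fromBlocks (P + ν • Q) B (S + ν • T) U).det := by
  -- columns `(u, u')` become `(u + (ν - 1) u', u + ν u')`, making the first block row `[1, 0, 0]`
  set C : Matrix ((m ⊕ m) ⊕ n) ((m ⊕ m) ⊕ n) R :=
    fromBlocks (fromBlocks 1 1 (ν • 1 - 1) (ν • 1)) 0 0 1
  have hC : C.det = 1 := by
    rw [det_fromBlocks_zero₂₁, det_one, mul_one, det_fromBlocks_one₁₁, Matrix.mul_one,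
      sub_sub_cancel, det_one]
  have hNC : fromBlocks (fromBlocks (ν • 1) (-1) P Q) (fromRows 0 B) (fromCols S T) U * C =
      fromBlocks (fromBlocks (1 : Matrix m m R) 0 (P + ν • Q - Q) (P + ν • Q)) (fromRows 0 B)
        (fromCols (S + ν • T - T) (S + ν • T)) U := by
    simp only [C, fromBlocks_multiply, fromCols_mul_fromBlocks]
    simp only [Matrix.mul_zero, Matrix.mul_one, add_zero, Matrix.mul_smul, Matrix.mul_sub,
      smul_neg, add_sub_assoc']
    congr 2 <;> abel
  have hre : (fromBlocks (fromBlocks (1 : Matrix m m R) 0 (P + ν • Q - Q) (P + ν • Q))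
        (fromRows 0 B) (fromCols (S + ν • T - T) (S + ν • T)) U).submatrix
        (Equiv.sumAssoc m m n).symm (Equiv.sumAssoc m m n).symm =
      fromBlocks 1 0 (fromRows (P + ν • Q - Q) (S + ν • T - T))
        (fromBlocks (P + ν • Q) B (S + ν • T) U) := by
    ext (i | i | i) (j | j | j) <;> rfl
  rw [← mul_one (det _), ← hC, ← det_mul, hNC,
    ← det_submatrix_equiv_self (Equiv.sumAssoc m m n).symm, hre, det_fromBlocks_zero₁₂, det_one,
    one_mul]

theorem det_mul_det_smul_one_sub_linearization (a₁₁ b₁₁ : Matrix m m R) (b₁₂ : Matrix m n R)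
    (a₂₁ b₂₁ : Matrix n m R) (a₂₂ b₂₂ : Matrix n n R) (ha₂₂ : IsUnit a₂₂) (l ν : R) :
    a₂₂.det * (ν • 1 - fromBlocks (fromBlocks 0 1 (l • 1 - b₁₁) (-a₁₁)) (fromRows 0 (-b₁₂))
      (fromCols (-(a₂₂⁻¹ * b₂₁)) (-(a₂₂⁻¹ * a₂₁))) (a₂₂⁻¹ * (l • 1 - b₂₂))).det =
      (-1) ^ (Fintype.card m + Fintype.card n) *
        (fromBlocks ((l - ν ^ 2) • 1 - ν • a₁₁ - b₁₁) (-b₁₂) (-(b₂₁ + ν • a₂₁))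
          (l • 1 - ν • a₂₂ - b₂₂)).det := by
  have hdet : IsUnit a₂₂.det := (isUnit_iff_isUnit_det a₂₂).mp ha₂₂
  set E : Matrix ((m ⊕ m) ⊕ n) ((m ⊕ m) ⊕ n) R := fromBlocks 1 0 0 a₂₂
  have hE : E.det = a₂₂.det := by rw [det_fromBlocks_zero₂₁, det_one, one_mul]
  have hEM : E * (ν • 1 - fromBlocks (fromBlocks 0 1 (l • 1 - b₁₁) (-a₁₁)) (fromRows 0 (-b₁₂))
      (fromCols (-(a₂₂⁻¹ * b₂₁)) (-(a₂₂⁻¹ * a₂₁))) (a₂₂⁻¹ * (l • 1 - b₂₂))) =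
      fromBlocks (fromBlocks (ν • 1) (-1) (b₁₁ - l • 1) (ν • 1 + a₁₁)) (fromRows 0 b₁₂)
        (fromCols b₂₁ a₂₁) (ν • a₂₂ - (l • 1 - b₂₂)) := by
    rw [← fromBlocks_one, ← fromBlocks_one (l := m)]
    simp only [E, fromBlocks_smul, sub_eq_add_neg, fromBlocks_neg, fromBlocks_add,
      fromBlocks_multiply]
    simp only [smul_zero, zero_add, neg_zero, add_zero, neg_neg, Matrix.one_mul, Matrix.zero_mul,
      fromRows_neg, fromCols_neg, neg_add_rev, mul_fromCols, Matrix.mul_add, Matrix.mul_neg,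
      Matrix.mul_smul, Matrix.mul_one, Matrix.mul_nonsing_inv_cancel_left _ _ hdet,
      Matrix.mul_nonsing_inv _ hdet]
  rw [← hE, ← det_mul, hEM, det_fromBlocks_smul_one_neg_one, ← Fintype.card_sum, ← det_neg,
    fromBlocks_neg]
  congr 2
  · rw [smul_add, smul_smul, ← pow_two, sub_smul]
    abel
  · rw [neg_neg]
  · rw [neg_neg]
  · abel

end

theorem stmt_5_general (m k : ℕ)
    (a₁₁ b₁₁ : Matrix (Fin m) (Fin m) ℂ) (b₁₂ : Matrix (Fin m) (Fin k) ℂ)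
    (a₂₁ b₂₁ : Matrix (Fin k) (Fin m) ℂ) (a₂₂ b₂₂ : Matrix (Fin k) (Fin k) ℂ)
    (ha₂₂ : IsUnit a₂₂) (l μ : ℂ)
    (A : Matrix ((Fin m ⊕ Fin m) ⊕ Fin k) ((Fin m ⊕ Fin m) ⊕ Fin k) ℂ)
    (hA : A = Matrix.fromBlocks
      (Matrix.fromBlocks 0 1 (l • 1 - b₁₁) (-a₁₁))
      (Matrix.fromRows 0 (-b₁₂))
      (Matrix.fromCols (-(a₂₂⁻¹ * b₂₁)) (-(a₂₂⁻¹ * a₂₁)))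
      (a₂₂⁻¹ * (l • 1 - b₂₂))) :
    a₂₂.det * ((Complex.I * μ) • (1 : Matrix ((Fin m ⊕ Fin m) ⊕ Fin k) ((Fin m ⊕ Fin m) ⊕ Fin k) ℂ) - A).det
      = (-1 : ℂ) ^ (m + k) *
        (Matrix.fromBlocks
          ((l + μ ^ 2) • (1 : Matrix (Fin m) (Fin m) ℂ) - (Complex.I * μ) • a₁₁ - b₁₁) (-b₁₂)
          (-(b₂₁ + (Complex.I * μ) • a₂₁)) (l • (1 : Matrix (Fin k) (Fin k) ℂ) - (Complex.I * μ) • a₂₂ - b₂₂)).det := by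
  have hν : l + μ ^ 2 = l - (Complex.I * μ) ^ 2 := by
    rw [mul_pow, Complex.I_sq]
    ring
  rw [hA, det_mul_det_smul_one_sub_linearization _ _ _ _ _ _ _ ha₂₂, hν, Fintype.card_fin,
    Fintype.card_fin]

/-- Block determinant identity relating `det(iμ I - A₂(λ))` to the dispersion function
`Δ₂(λ, μ)` in the partially-degenerate diffusion case. -/
theorem stmt_5 (m k : ℕ) (hm : 1 ≤ m) (hk : 1 ≤ k)
    (a₁₁ b₁₁ : Matrix (Fin m) (Fin m) ℂ) (b₁₂ : Matrix (Fin m) (Fin k) ℂ)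
    (a₂₁ b₂₁ : Matrix (Fin k) (Fin m) ℂ) (a₂₂ b₂₂ : Matrix (Fin k) (Fin k) ℂ)
    (ha₂₂ : IsUnit a₂₂) (l μ : ℂ)
    (A : Matrix ((Fin m ⊕ Fin m) ⊕ Fin k) ((Fin m ⊕ Fin m) ⊕ Fin k) ℂ)
    (hA : A = Matrix.fromBlocks
      (Matrix.fromBlocks 0 1 (l • 1 - b₁₁) (-a₁₁))
      (Matrix.fromRows 0 (-b₁₂))
      (Matrix.fromCols (-(a₂₂⁻¹ * b₂₁)) (-(a₂₂⁻¹ * a₂₁)))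
      (a₂₂⁻¹ * (l • 1 - b₂₂))) :
    a₂₂.det * ((Complex.I * μ) • (1 : Matrix ((Fin m ⊕ Fin m) ⊕ Fin k) ((Fin m ⊕ Fin m) ⊕ Fin k) ℂ) - A).det
      = (-1 : ℂ) ^ (m + k) *
        (Matrix.fromBlocks
          ((l + μ ^ 2) • (1 : Matrix (Fin m) (Fin m) ℂ) - (Complex.I * μ) • a₁₁ - b₁₁) (-b₁₂)
          (-(b₂₁ + (Complex.I * μ) • a₂₁)) (l • (1 : Matrix (Fin k) (Fin k) ℂ) - (Complex.I * μ) • a₂₂ - b₂₂)).det :=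
  stmt_5_general m k a₁₁ b₁₁ b₁₂ a₂₁ b₂₁ a₂₂ b₂₂ ha₂₂ l μ A hA
end

section
/- Let n ≥ 1, let M be an n×n complex matrix, let T > 0 and μ₀ ∈ ℝ. Then det(exp(T•(M − i·μ₀·I_n)) − I_n) = 0 if and only if there exists k ∈ ℤ such that i·(μ₀ + 2kπ/T) is an eigenvalue of M. -/
/-!
If `A *ᵥ w = μ • w` then `exp A *ᵥ w = e^μ • w`. Conversely the fixed space of `exp A` is
`A`-invariant, so when it is nonzero it contains an eigenvector of `A`, whose eigenvalue `μ`
then satisfies `e^μ = 1`, i.e. `μ ∈ 2πiℤ`. For `A = T • (M - iμ₀ • 1)` the eigenvalues are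
`T (λ - iμ₀)` with `λ` an eigenvalue of `M`.
-/

open NormedSpace

namespace Module.End

variable {K V : Type*} [Field K] [IsAlgClosed K] [AddCommGroup V] [Module K V]
  [FiniteDimensional K V]

theorem exists_hasEigenvector_mem_ker_of_commute {f g : End K V} (h : Commute f g)
    (hg : LinearMap.ker g ≠ ⊥) : ∃ μ v, f.HasEigenvector μ v ∧ g v = 0 := by
  have hfg : ∀ x ∈ LinearMap.ker g, f x ∈ LinearMap.ker g := fun x hx => by
    rw [LinearMap.mem_ker] at hx ⊢
    rw [← mul_apply, ← h.eq, mul_apply, hx, map_zero]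
  have : Nontrivial (LinearMap.ker g) := Submodule.nontrivial_iff_ne_bot.mpr hg
  obtain ⟨μ, hμ⟩ := exists_eigenvalue (f.restrict hfg)
  obtain ⟨x, hx⟩ := hμ.exists_hasEigenvector
  refine ⟨μ, x, hasEigenvector_iff.2 ⟨mem_eigenspace_iff.2 ?_, ?_⟩, x.2⟩
  · simpa using congrArg Subtype.val hx.apply_eq_smul
  · simpa using hx.2

end Module.End

namespace Matrix

variable {m : Type*} [Fintype m] [DecidableEq m]

theorem det_smul_one_sub_eq_zero_iff {R : Type*} [CommRing R] [IsDomain R] (A : Matrix m m R)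
    (c : R) : (c • 1 - A).det = 0 ↔ ∃ w ≠ 0, A *ᵥ w = c • w := by
  rw [← exists_mulVec_eq_zero_iff]
  simp only [sub_mulVec, smul_mulVec, one_mulVec, sub_eq_zero, eq_comm]

theorem exp_mulVec_of_mulVec_eq_smul {𝕂 : Type*} [RCLike 𝕂] {A : Matrix m m 𝕂} {w : m → 𝕂}
    {c : 𝕂} (h : A *ᵥ w = c • w) : exp A *ᵥ w = exp c • w := by
  have hpow (k : ℕ) : A ^ k *ᵥ w = c ^ k • w := by
    induction k with
    | zero => simp
    | succ k ih => rw [pow_succ', ← mulVec_mulVec, ih, mulVec_smul, h, smul_smul, pow_succ]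
  have hA := open scoped Norms.Operator in
    (exp_series_hasSum_exp' (𝕂 := 𝕂) A).map (mulVec.addMonoidHomLeft w)
      (continuous_id.matrix_mulVec continuous_const)
  have hc := (exp_series_hasSum_exp' (𝕂 := 𝕂) c).smul_const w
  refine hA.unique ?_
  simpa [Function.comp_def, mulVec.addMonoidHomLeft, smul_mulVec, hpow, smul_smul] using hc

theorem det_exp_sub_one_eq_zero_iff (A : Matrix m m ℂ) :
    (exp A - 1).det = 0 ↔ ∃ k : ℤ, ((2 * Real.pi * Complex.I * k) • 1 - A).det = 0 := by
  simp only [det_smul_one_sub_eq_zero_iff]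
  constructor
  · intro h
    have hker : LinearMap.ker (toLin' (exp A - 1)) ≠ ⊥ := by
      obtain ⟨v, hv0, hv⟩ := exists_mulVec_eq_zero_iff.2 h
      exact Submodule.ne_bot_iff _ |>.2 ⟨v, hv, hv0⟩
    have hcomm : Commute (toLin' A) (toLin' (exp A - 1)) :=
      ((Commute.refl A).exp_right.sub_right (Commute.one_right A)).map toLinAlgEquiv'
    obtain ⟨μ, w, hw, hw1⟩ := Module.End.exists_hasEigenvector_mem_ker_of_commute hcomm hker
    have hAw : A *ᵥ w = μ • w := hw.apply_eq_smul
    have hexp : Complex.exp μ • w = (1 : ℂ) • w := by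
      simpa [sub_mulVec, exp_mulVec_of_mulVec_eq_smul hAw, sub_eq_zero, Complex.exp_eq_exp_ℂ]
        using hw1
    obtain ⟨k, hk⟩ := Complex.exp_eq_one_iff.1 (smul_left_injective ℂ hw.2 hexp)
    exact ⟨k, w, hw.2, by rw [hAw, hk]; ring_nf⟩
  · rintro ⟨k, w, hw0, hw⟩
    refine exists_mulVec_eq_zero_iff.1 ⟨w, hw0, ?_⟩
    rw [sub_mulVec, exp_mulVec_of_mulVec_eq_smul hw, ← Complex.exp_eq_exp_ℂ,
      Complex.exp_eq_one_iff.2 ⟨k, by ring⟩, one_smul, one_mulVec, sub_self]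

end Matrix

theorem stmt_10_general (n : ℕ) (M : Matrix (Fin n) (Fin n) ℂ)
    (T : ℝ) (hT : 0 < T) (μ₀ : ℝ) :
    (NormedSpace.exp (T • (M - (Complex.I * (μ₀ : ℂ)) • 1)) - 1).det = 0 ↔
      ∃ k : ℤ, ((Complex.I * ((μ₀ : ℂ) + 2 * (k : ℂ) * (Real.pi : ℂ) / (T : ℂ))) •
          (1 : Matrix (Fin n) (Fin n) ℂ) - M).det = 0 := by
  have hT0 : (T : ℂ) ≠ 0 := by exact_mod_cast hT.ne'
  rw [Matrix.det_exp_sub_one_eq_zero_iff]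
  refine exists_congr fun k => ?_
  have hscal : (T : ℂ) * (Complex.I * (μ₀ + 2 * k * Real.pi / T))
      = 2 * Real.pi * Complex.I * k + T * (Complex.I * μ₀) := by
    field_simp
    ring
  have hshift : (2 * Real.pi * Complex.I * k) • 1 - T • (M - (Complex.I * (μ₀ : ℂ)) • 1)
      = (T : ℂ) • ((Complex.I * (μ₀ + 2 * k * Real.pi / T)) • 1 - M) := by
    rw [← Complex.coe_smul, smul_sub, smul_sub, smul_smul, smul_smul, hscal, add_smul]
    abel
  rw [hshift, Matrix.det_smul, mul_eq_zero, or_iff_right (pow_ne_zero _ hT0)]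

/-- `det (exp (T • (M - iμ₀ I)) - I) = 0` iff `i(μ₀ + 2kπ/T)` is an eigenvalue of `M` for
some integer `k`. -/
theorem stmt_10 (n : ℕ) (hn : 1 ≤ n) (M : Matrix (Fin n) (Fin n) ℂ)
    (T : ℝ) (hT : 0 < T) (μ₀ : ℝ) :
    (NormedSpace.exp (T • (M - (Complex.I * (μ₀ : ℂ)) • 1)) - 1).det = 0 ↔
      ∃ k : ℤ, ((Complex.I * ((μ₀ : ℂ) + 2 * (k : ℂ) * (Real.pi : ℂ) / (T : ℂ))) •
          (1 : Matrix (Fin n) (Fin n) ℂ) - M).det = 0 :=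
  stmt_10_general n M T hT μ₀
end

section
/- Let n ≥ 1, T > 0, and let A : ℝ → Mₙ(ℂ) be continuous. Let μ₁, μ₂ ∈ ℝ with μ₂ − μ₁ = 2kπ/T for some k ∈ ℤ. For j = 1, 2, let Φⱼ : ℝ → Mₙ(ℂ) satisfy Φⱼ(0) = I_n and, for every ξ ∈ ℝ, Φⱼ has derivative (A(ξ) − i·μⱼ·I_n)·Φⱼ(ξ) at ξ. Then det(Φ₂(T) − I_n) = det(Φ₁(T) − I_n). -/
/-! Multiplying `Φ₁` by the scalar gauge factor `exp (-i (μ₂ - μ₁) ξ)` shifts the coefficient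
`A - i μ₁` to `A - i μ₂` without changing the value at `0`, so by uniqueness for linear ODEs the
result is `Φ₂`. At `ξ = T` the factor is `exp (-2π i k) = 1`, hence `Φ₂ T = Φ₁ T`. -/

open scoped Matrix

attribute [local instance] Matrix.linftyOpNormedAddCommGroup Matrix.linftyOpNormedSpace

open Set Complex

namespace Matrix

variable {ι α : Type*} [Fintype ι]

theorem linfty_lipschitzWith_mul_left [NormedRing α] (A : Matrix ι ι α) :
    LipschitzWith ‖A‖₊ (A * ·) :=
  LipschitzWith.of_dist_le_mul fun X Y => by
    simpa only [dist_eq_norm, ← Matrix.mul_sub, coe_nnnorm] using linfty_opNorm_mul A (X - Y)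

theorem eqOn_Icc_of_hasDerivWithinAt_mul_left [NormedRing α] [NormedSpace ℝ α]
    {M X Y : ℝ → Matrix ι ι α} {a b : ℝ} (hM : ContinuousOn M (Icc a b))
    (hX : ContinuousOn X (Icc a b)) (hX' : ∀ t ∈ Ico a b, HasDerivWithinAt X (M t * X t) (Ici t) t)
    (hY : ContinuousOn Y (Icc a b)) (hY' : ∀ t ∈ Ico a b, HasDerivWithinAt Y (M t * Y t) (Ici t) t)
    (ha : X a = Y a) : EqOn X Y (Icc a b) := by
  obtain ⟨C, hC⟩ := isCompact_Icc.exists_bound_of_continuousOn hM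
  have hLip : ∀ t ∈ Ico a b, LipschitzOnWith C.toNNReal (M t * ·) univ := fun t ht =>
    ((linfty_lipschitzWith_mul_left (M t)).weaken
      (by simpa only [← NNReal.coe_le_coe, coe_nnnorm, Real.coe_toNNReal'] using
        (hC t (Ico_subset_Icc_self ht)).trans (le_max_left C 0))).lipschitzOnWith
  exact ODE_solution_unique_of_mem_Icc_right hLip hX hX' (fun _ _ => trivial) hY hY'
    (fun _ _ => trivial) ha

theorem hasDerivAt_cexp_mul_smul [DecidableEq ι] {Φ M : ℝ → Matrix ι ι ℂ} {ξ : ℝ}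
    (hΦ : HasDerivAt Φ (M ξ * Φ ξ) ξ) (ν : ℂ) :
    HasDerivAt (fun t : ℝ => exp (ν * t) • Φ t) ((M ξ + ν • 1) * (exp (ν * ξ) • Φ ξ)) ξ := by
  have hexp : HasDerivAt (fun t : ℝ => exp (ν * t)) (exp (ν * ξ) * ν) ξ := by
    simpa using ((hasDerivAt_id ξ).ofReal_comp.const_mul ν).cexp
  refine (hexp.smul hΦ).congr_deriv ?_
  simp only [add_mul, Matrix.mul_smul, Matrix.smul_mul, Matrix.one_mul, smul_smul]

end Matrix

theorem Complex.exp_neg_I_mul_mul_eq_one {μ T : ℝ} {k : ℤ} (hT : T ≠ 0)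
    (hμ : μ = 2 * k * Real.pi / T) : exp (-(I * μ) * T) = 1 := by
  have hT' : (T : ℂ) ≠ 0 := by exact_mod_cast hT
  rw [Complex.exp_eq_one_iff]
  refine ⟨-k, ?_⟩
  rw [hμ]
  push_cast
  field_simp

theorem stmt_12_general (n : ℕ) (T : ℝ) (hT : 0 < T)
    (A : ℝ → Matrix (Fin n) (Fin n) ℂ) (hA : Continuous A)
    (μ₁ μ₂ : ℝ) (k : ℤ) (hμ : μ₂ - μ₁ = 2 * (k : ℝ) * Real.pi / T)
    (Φ₁ Φ₂ : ℝ → Matrix (Fin n) (Fin n) ℂ)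
    (hΦ₁0 : Φ₁ 0 = 1)
    (hΦ₁ : ∀ ξ : ℝ, HasDerivAt Φ₁ ((A ξ - (Complex.I * (μ₁ : ℂ)) • 1) * Φ₁ ξ) ξ)
    (hΦ₂0 : Φ₂ 0 = 1)
    (hΦ₂ : ∀ ξ : ℝ, HasDerivAt Φ₂ ((A ξ - (Complex.I * (μ₂ : ℂ)) • 1) * Φ₂ ξ) ξ) :
    (Φ₂ T - 1).det = (Φ₁ T - 1).det := by
  set Ψ := fun t : ℝ => exp (-(I * ↑(μ₂ - μ₁)) * t) • Φ₁ t with hΨdef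
  have hΨ : ∀ ξ, HasDerivAt Ψ ((A ξ - (I * μ₂) • 1) * Ψ ξ) ξ := fun ξ => by
    convert Matrix.hasDerivAt_cexp_mul_smul (M := fun ξ => A ξ - (I * μ₁) • 1) (hΦ₁ ξ)
      (-(I * ↑(μ₂ - μ₁))) using 2
    push_cast
    module
  have hΦ₂Ψ := Matrix.eqOn_Icc_of_hasDerivWithinAt_mul_left (a := 0) (b := T)
    (hA.sub continuous_const).continuousOn
    (HasDerivAt.continuousOn fun t _ => hΦ₂ t) (fun t _ => (hΦ₂ t).hasDerivWithinAt)
    (HasDerivAt.continuousOn fun t _ => hΨ t) (fun t _ => (hΨ t).hasDerivWithinAt)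
    (by simp [Ψ, hΦ₁0, hΦ₂0])
  rw [hΦ₂Ψ ⟨hT.le, le_rfl⟩, hΨdef]
  beta_reduce
  rw [Complex.exp_neg_I_mul_mul_eq_one hT.ne' hμ, one_smul]

/-- The Evans function `det (Φ(T) - I)` is periodic in the Floquet parameter `μ` with
period `2π/T`. -/
theorem stmt_12 (n : ℕ) (hn : 1 ≤ n) (T : ℝ) (hT : 0 < T)
    (A : ℝ → Matrix (Fin n) (Fin n) ℂ) (hA : Continuous A)
    (μ₁ μ₂ : ℝ) (k : ℤ) (hμ : μ₂ - μ₁ = 2 * (k : ℝ) * Real.pi / T)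
    (Φ₁ Φ₂ : ℝ → Matrix (Fin n) (Fin n) ℂ)
    (hΦ₁0 : Φ₁ 0 = 1)
    (hΦ₁ : ∀ ξ : ℝ, HasDerivAt Φ₁ ((A ξ - (Complex.I * (μ₁ : ℂ)) • 1) * Φ₁ ξ) ξ)
    (hΦ₂0 : Φ₂ 0 = 1)
    (hΦ₂ : ∀ ξ : ℝ, HasDerivAt Φ₂ ((A ξ - (Complex.I * (μ₂ : ℂ)) • 1) * Φ₂ ξ) ξ) :
    (Φ₂ T - 1).det = (Φ₁ T - 1).det :=
  stmt_12_general n T hT A hA μ₁ μ₂ k hμ Φ₁ Φ₂ hΦ₁0 hΦ₁ hΦ₂0 hΦ₂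
end

section
/- Define H : ℝ × ℝ → ℝ by H(x, y) = −(2/3)x² + (1/3)x³ + (2/3)xy − (2/3)y². Let u, v : ℝ → ℝ satisfy, for all t ∈ ℝ, u has derivative (2/3)u(t) − (4/3)v(t) at t and v has derivative −u(t)² + (4/3)u(t) − (2/3)v(t) at t. Then H(u(t), v(t)) = H(u(0), v(0)) for all t ∈ ℝ. -/
/-!
The system is Hamiltonian: `u' = ∂H/∂y (u, v)` and `v' = -∂H/∂x (u, v)`. Along a solution the
chain rule gives `d/dt H(u, v) = H_x H_y - H_y H_x = 0`, and a function on `ℝ` with zero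
derivative everywhere is constant.
-/

open ContinuousLinearMap

theorem hamiltonian_apply_eq_of_hasDerivAt {H Hx Hy : ℝ × ℝ → ℝ}
    (hH : ∀ p, HasFDerivAt H (Hx p • fst ℝ ℝ ℝ + Hy p • snd ℝ ℝ ℝ) p)
    {u v : ℝ → ℝ} (hu : ∀ t, HasDerivAt u (Hy (u t, v t)) t)
    (hv : ∀ t, HasDerivAt v (-Hx (u t, v t)) t) (t : ℝ) :
    H (u t, v t) = H (u 0, v 0) := by
  have hconst : ∀ s, HasDerivAt (fun s => H (u s, v s)) 0 s := fun s => by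
    refine ((hH _).comp_hasDerivAt s ((hu s).prodMk (hv s))).congr_deriv ?_
    simp only [add_apply, smul_apply, coe_fst', coe_snd', smul_eq_mul, mul_neg]
    ring
  exact is_const_of_deriv_eq_zero (fun s => (hconst s).differentiableAt)
    (fun s => (hconst s).deriv) t 0

noncomputable def burgersFisherHamiltonian (q : ℝ × ℝ) : ℝ :=
  -(2 / 3) * q.1 ^ 2 + (1 / 3) * q.1 ^ 3 + (2 / 3) * q.1 * q.2 - (2 / 3) * q.2 ^ 2

theorem hasFDerivAt_burgersFisherHamiltonian (p : ℝ × ℝ) :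
    HasFDerivAt burgersFisherHamiltonian
      ((-(4 / 3) * p.1 + p.1 ^ 2 + (2 / 3) * p.2) • fst ℝ ℝ ℝ
        + ((2 / 3) * p.1 - (4 / 3) * p.2) • snd ℝ ℝ ℝ) p := by
  have hx : HasFDerivAt Prod.fst (fst ℝ ℝ ℝ) p := hasFDerivAt_fst
  have hy : HasFDerivAt Prod.snd (snd ℝ ℝ ℝ) p := hasFDerivAt_snd
  refine (((((hx.pow 2).const_mul (-(2 / 3))).add ((hx.pow 3).const_mul (1 / 3))).add
    ((hx.const_mul (2 / 3)).mul hy)).sub ((hy.pow 2).const_mul (2 / 3))).congr_fderiv ?_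
  refine ContinuousLinearMap.ext fun q => ?_
  simp only [add_apply, sub_apply, smul_apply, coe_fst', coe_snd', smul_eq_mul, nsmul_eq_mul]
  ring

/-- `H(x,y) = -(2/3)x² + (1/3)x³ + (2/3)xy - (2/3)y²` is a first integral of the planar
system `u' = (2/3)u - (4/3)v`, `v' = -u² + (4/3)u - (2/3)v`. -/
theorem stmt_18 (H : ℝ × ℝ → ℝ)
    (hH : ∀ x y : ℝ,
      H (x, y) = -(2 / 3) * x ^ 2 + (1 / 3) * x ^ 3 + (2 / 3) * x * y - (2 / 3) * y ^ 2)
    (u v : ℝ → ℝ)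
    (hu : ∀ t : ℝ, HasDerivAt u ((2 / 3) * u t - (4 / 3) * v t) t)
    (hv : ∀ t : ℝ, HasDerivAt v (-(u t) ^ 2 + (4 / 3) * u t - (2 / 3) * v t) t) :
    ∀ t : ℝ, H (u t, v t) = H (u 0, v 0) := by
  obtain rfl : H = burgersFisherHamiltonian := funext fun q => hH q.1 q.2
  refine hamiltonian_apply_eq_of_hasDerivAt hasFDerivAt_burgersFisherHamiltonian hu fun t => ?_
  convert hv t using 1
  ring
end
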